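/- arXiv:1702.06496 — 6 statements merged into one kernel-verified Lean document; each statement's English description precedes it below -/
import Mathlib

section
/- Let T be a tree in the family T_Δ with underlying subtrees T_1, …, T_k whose central vertices are v_1, …, v_k. If S is obtained from the vertex set of T by removing, for each i, exactly one leaf neighbor in T of the central vertex v_i, then S is a minimum total forcing set of T; in particular |S| = F_t(T). -/
/-! Basic definitions: (zero) forcing, total forcing, forcing numbers. -/

namespace TotalForcing

variable {V : Type*}

/-- The set of vertices eventually colored by the forcing process starting from `S`:
a vertex is colored if it is in `S`, or if some colored vertex `u` is adjacent to it
while all other neighbors of `u` are already colored (so `v` is the unique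
non-colored neighbor of `u`, and `u` forces `v`). -/
inductive Forces (G : SimpleGraph V) (S : Set V) : V → Prop
  | mem : ∀ {v : V}, v ∈ S → Forces G S v
  | force : ∀ {u v : V}, G.Adj u v → Forces G S u →
      (∀ w, G.Adj u w → w ≠ v → Forces G S w) → Forces G S v

/-- `S` is a forcing set of `G` if the forcing process colors every vertex. -/
def IsForcingSet (G : SimpleGraph V) (S : Set V) : Prop := ∀ v : V, Forces G S v

/-- A total forcing set is a forcing set inducing a subgraph without isolated vertices. -/
def IsTotalForcingSet (G : SimpleGraph V) (S : Set V) : Prop :=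
  IsForcingSet G S ∧ ∀ v ∈ S, ∃ u ∈ S, G.Adj v u

/-- The forcing number `F(G)`. -/
noncomputable def forcingNumber (G : SimpleGraph V) [Fintype V] : ℕ :=
  sInf {n : ℕ | ∃ S : Finset V, S.card = n ∧ IsForcingSet G ↑S}

/-- The total forcing number `F_t(G)`. -/
noncomputable def totalForcingNumber (G : SimpleGraph V) [Fintype V] : ℕ :=
  sInf {n : ℕ | ∃ S : Finset V, S.card = n ∧ IsTotalForcingSet G ↑S}

/-- A leaf is a vertex of degree 1. -/
def IsLeaf (G : SimpleGraph V) (v : V) : Prop := (G.neighborSet v).ncard = 1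

/-- The number of leaves of `G`. -/
noncomputable def numLeaves (G : SimpleGraph V) : ℕ := {v : V | IsLeaf G v}.ncard

/-- A strong support vertex is a vertex with at least two leaf neighbors. -/
def IsStrongSupport (G : SimpleGraph V) (v : V) : Prop :=
  ∃ x y : V, x ≠ y ∧ G.Adj v x ∧ G.Adj v y ∧ IsLeaf G x ∧ IsLeaf G y

end TotalForcing

namespace TotalForcing

/-- The vertex set of `T` is partitioned into `P 0, …, P (k-1)`; the subgraph of `T`
induced by `P i` is a star with central vertex `c i`, isomorphic to `K_{1,Δ}` for `i = 0`
and to `K_{1,Δ-1}` otherwise; each `c i` is a strong support vertex of degree `Δ` in `T`;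
and the central vertices form an independent set in `T`. -/
def IsTStructure {V : Type*} [Fintype V] (T : SimpleGraph V) [DecidableRel T.Adj]
    {k : ℕ} (Δ : ℕ) (P : Fin k → Finset V) (c : Fin k → V) : Prop :=
  (∀ x : V, ∃! i : Fin k, x ∈ P i) ∧
  (∀ i, c i ∈ P i) ∧
  (∀ i : Fin k, (P i).card = if (i : ℕ) = 0 then Δ + 1 else Δ) ∧
  (∀ i, ∀ x ∈ P i, x ≠ c i → T.Adj (c i) x) ∧
  (∀ i, ∀ x ∈ P i, ∀ y ∈ P i, x ≠ c i → y ≠ c i → ¬ T.Adj x y) ∧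
  (∀ i, T.degree (c i) = Δ) ∧
  (∀ i, IsStrongSupport T (c i)) ∧
  (∀ i j, ¬ T.Adj (c i) (c j))

/-- Membership in the family `𝒯_Δ`. -/
def InFamilyT {V : Type*} [Fintype V] (T : SimpleGraph V) [DecidableRel T.Adj]
    (Δ : ℕ) : Prop :=
  T.maxDegree = Δ ∧
    ∃ (k : ℕ), 0 < k ∧ ∃ (P : Fin k → Finset V) (c : Fin k → V), IsTStructure T Δ P c

end TotalForcing

/-!
The central vertices form an independent set whose degrees add up to `kΔ = |V(T)| - 1`, the
number of edges of the tree, so every edge of `T` meets a center. A center `v` lies in every total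
forcing set: otherwise its leaves, whose only neighbor is `v`, would lie outside as well, and `v`
would have to force both of them, while a vertex forces at most once. So every vertex outside a
total forcing set is forced by a center, each center forcing at most one vertex, and at most `k`
vertices are missing. Removing one leaf per center attains this bound.
-/

namespace SimpleGraph

open Finset

variable {V : Type*} [Fintype V] [DecidableEq V] {G : SimpleGraph V} [DecidableRel G.Adj]

/-- The incidence sets of an independent set are pairwise disjoint, so if their sizes add up to
the number of edges, they cover all edges. -/
lemma IsIndepSet.mem_or_mem_of_sum_degree_eq {C : Finset V} (hC : G.IsIndepSet C)
    (hsum : ∑ v ∈ C, G.degree v = #G.edgeFinset) {x y : V} (hxy : G.Adj x y) :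
    x ∈ C ∨ y ∈ C := by
  have hdisj : (C : Set V).PairwiseDisjoint (G.incidenceFinset ·) := by
    intro a ha b hb hab
    change Disjoint (G.incidenceFinset a) (G.incidenceFinset b)
    rw [← disjoint_coe, coe_incidenceFinset, coe_incidenceFinset,
      Set.disjoint_iff_inter_eq_empty]
    exact G.incidenceSet_inter_incidenceSet_of_not_adj (hC ha hb hab) hab
  have hcover : C.biUnion (G.incidenceFinset ·) = G.edgeFinset := by
    refine eq_of_subset_of_card_le (biUnion_subset.mpr fun v _ => G.incidenceFinset_subset v) ?_
    simp [card_biUnion hdisj, card_incidenceFinset_eq_degree, hsum]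
  have hmem : s(x, y) ∈ C.biUnion (G.incidenceFinset ·) := hcover ▸ G.mem_edgeFinset.mpr hxy
  obtain ⟨v, hv, hxyv⟩ := mem_biUnion.mp hmem
  rcases Sym2.mem_iff.mp ((G.mem_incidenceFinset _ _).mp hxyv).2 with rfl | rfl
  · exact Or.inl hv
  · exact Or.inr hv

end SimpleGraph

namespace TotalForcing

open Finset

variable {V : Type*} {G : SimpleGraph V} {S : Set V}

lemma IsLeaf.eq_of_adj {x u w : V} (hx : IsLeaf G x) (hu : G.Adj x u) (hw : G.Adj x w) :
    u = w := by
  obtain ⟨a, ha⟩ := Set.ncard_eq_one.mp hx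
  have hu' : u ∈ G.neighborSet x := hu
  have hw' : w ∈ G.neighborSet x := hw
  rw [ha, Set.mem_singleton_iff] at hu' hw'
  rw [hu', hw']

lemma isForcingSet_of_forall_notMem
    (h : ∀ v ∉ S, ∃ u ∈ S, G.Adj u v ∧ ∀ w, G.Adj u w → w ≠ v → w ∈ S) :
    IsForcingSet G S := fun v => by
  by_cases hv : v ∈ S
  · exact .mem hv
  · obtain ⟨u, huS, huv, hu⟩ := h v hv
    exact .force huv (.mem huS) fun w huw hwv => .mem (hu w huw hwv)

section Chronology

variable (G S)

/-- The vertices colored after `n` rounds of the forcing process, all possible forces being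
performed simultaneously in each round. -/
def coloredAfter : ℕ → Set V
  | 0 => S
  | n + 1 => coloredAfter n ∪
      {v | ∃ u, G.Adj u v ∧ u ∈ coloredAfter n ∧ ∀ w, G.Adj u w → w ≠ v → w ∈ coloredAfter n}

lemma monotone_coloredAfter : Monotone (coloredAfter G S) :=
  monotone_nat_of_le_succ fun _ => Set.subset_union_left

noncomputable def forcingTime (v : V) : ℕ := sInf {n | v ∈ coloredAfter G S n}

def IsForcer (u v : V) : Prop :=
  G.Adj u v ∧ ∀ w, G.Adj u w → w ≠ v → forcingTime G S w < forcingTime G S v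

variable {G S}

lemma forcingTime_le {v : V} {n : ℕ} (h : v ∈ coloredAfter G S n) : forcingTime G S v ≤ n :=
  Nat.sInf_le h

lemma Forces.mem_coloredAfter_forcingTime [Fintype V] {v : V} (h : Forces G S v) :
    v ∈ coloredAfter G S (forcingTime G S v) := by
  suffices ∃ n, v ∈ coloredAfter G S n from Nat.sInf_mem this
  induction h with
  | mem h => exact ⟨0, h⟩
  | @force u v huv _ _ ihu ihw =>
    let N := univ.sup (forcingTime G S)
    have hN : ∀ w, (∃ n, w ∈ coloredAfter G S n) → w ∈ coloredAfter G S N := fun w hw =>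
      monotone_coloredAfter G S (le_sup (mem_univ w)) (Nat.sInf_mem hw)
    exact ⟨N + 1, Or.inr ⟨u, huv, hN u ihu, fun w huw hwv => hN w (ihw w huw hwv)⟩⟩

lemma Forces.exists_isForcer [Fintype V] {v : V} (h : Forces G S v) (hv : v ∉ S) :
    ∃ u, IsForcer G S u v := by
  have hmem := h.mem_coloredAfter_forcingTime
  obtain ⟨n, hn⟩ : ∃ n, forcingTime G S v = n + 1 :=
    Nat.exists_eq_succ_of_ne_zero fun h0 => hv (by rwa [h0] at hmem)
  rw [hn] at hmem
  rcases hmem with hmem | ⟨u, huv, -, hu⟩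
  · exact absurd (forcingTime_le hmem) (by omega)
  · exact ⟨u, huv, fun w huw hwv => (forcingTime_le (hu w huw hwv)).trans_lt (by omega)⟩

lemma IsForcer.eq {u x y : V} (hx : IsForcer G S u x) (hy : IsForcer G S u y) : x = y := by
  by_contra hxy
  have := hx.2 y hy.1 (Ne.symm hxy)
  have := hy.2 x hx.1 hxy
  omega

end Chronology

variable [Fintype V]

lemma IsForcingSet.mem_or_mem_of_isLeaf (h : IsForcingSet G S) {v x y : V} (hxy : x ≠ y)
    (hvx : G.Adj v x) (hvy : G.Adj v y) (hx : IsLeaf G x) (hy : IsLeaf G y) :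
    x ∈ S ∨ y ∈ S := by
  by_contra! hS
  obtain ⟨u, hux⟩ := (h x).exists_isForcer hS.1
  obtain ⟨w, hwy⟩ := (h y).exists_isForcer hS.2
  rw [hx.eq_of_adj hux.1.symm hvx.symm] at hux
  rw [hy.eq_of_adj hwy.1.symm hvy.symm] at hwy
  exact hxy (hux.eq hwy)

lemma IsTotalForcingSet.mem_of_isStrongSupport (h : IsTotalForcingSet G S) {v : V}
    (hv : IsStrongSupport G v) : v ∈ S := by
  obtain ⟨x, y, hxy, hvx, hvy, hx, hy⟩ := hv
  have of_leaf_mem : ∀ {z}, IsLeaf G z → G.Adj v z → z ∈ S → v ∈ S := fun hz hvz hzS => by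
    obtain ⟨u, huS, hzu⟩ := h.2 _ hzS
    rwa [hz.eq_of_adj hvz.symm hzu]
  rcases h.1.mem_or_mem_of_isLeaf hxy hvx hvy hx hy with hxS | hyS
  · exact of_leaf_mem hx hvx hxS
  · exact of_leaf_mem hy hvy hyS

lemma IsForcingSet.card_compl_le [DecidableEq V] {S C : Finset V} (h : IsForcingSet G S)
    (hC : ∀ u x, G.Adj u x → x ∉ S → u ∈ C) : #Sᶜ ≤ #C := by
  have hforcer : ∀ x, ∃ u, x ∉ S → IsForcer G S u x := fun x => by
    by_cases hx : x ∈ S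
    · exact ⟨x, fun hx' => (hx' hx).elim⟩
    · obtain ⟨u, hu⟩ := (h x).exists_isForcer (by simpa using hx)
      exact ⟨u, fun _ => hu⟩
  choose f hf using hforcer
  refine card_le_card_of_injOn f (fun x hx => ?_) (fun x hx y hy hxy => ?_)
  · exact hC _ x (hf x (mem_compl.mp hx)).1 (mem_compl.mp hx)
  · exact (hf x (mem_compl.mp hx)).eq (hxy ▸ hf y (mem_compl.mp hy))

lemma totalForcingNumber_eq_card {S : Finset V} (hS : IsTotalForcingSet G S)
    (hmin : ∀ S' : Finset V, IsTotalForcingSet G S' → #S ≤ #S') :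
    totalForcingNumber G = #S :=
  le_antisymm (Nat.sInf_le ⟨S, rfl, hS⟩)
    (le_csInf ⟨_, S, rfl, hS⟩ fun _ ⟨S', hcard, hS'⟩ => hcard ▸ hmin S' hS')

namespace IsTStructure

variable {T : SimpleGraph V} [DecidableRel T.Adj] {Δ k : ℕ}
  {P : Fin k → Finset V} {c : Fin k → V}

lemma injective_center (h : IsTStructure T Δ P c) : Function.Injective c :=
  fun i j hij => (h.1 (c i)).unique (h.2.1 i) (hij ▸ h.2.1 j)

lemma card_eq [DecidableEq V] [Nonempty V] (h : IsTStructure T Δ P c) :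
    Fintype.card V = k * Δ + 1 := by
  obtain ⟨hpart, -, hcard, -⟩ := h
  obtain ⟨i, -⟩ := (hpart (Classical.arbitrary V)).exists
  obtain ⟨m, rfl⟩ : ∃ m, k = m + 1 := Nat.exists_eq_succ_of_ne_zero i.pos.ne'
  have hunion : univ.biUnion P = univ := eq_univ_of_forall fun x => by
    obtain ⟨i, hi, -⟩ := hpart x
    exact mem_biUnion.mpr ⟨i, mem_univ _, hi⟩
  have hdisj : ((univ : Finset (Fin (m + 1))) : Set _).PairwiseDisjoint P := fun i _ j _ hij =>
    disjoint_left.mpr fun x hi hj => hij ((hpart x).unique hi hj)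
  rw [← card_univ, ← hunion, card_biUnion hdisj, Fin.sum_univ_succ]
  simp [hcard]
  ring

lemma mem_or_mem_of_adj [DecidableEq V] (h : IsTStructure T Δ P c) (hT : T.IsTree) {x y : V}
    (hxy : T.Adj x y) : x ∈ univ.image c ∨ y ∈ univ.image c := by
  have := hT.connected.nonempty
  have hcardV := h.card_eq
  have hcardE := hT.card_edgeFinset
  have hinj := h.injective_center
  obtain ⟨-, -, -, -, -, hdeg, -, hindep⟩ := h
  refine SimpleGraph.IsIndepSet.mem_or_mem_of_sum_degree_eq ?_ ?_ hxy
  · intro a ha b hb _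
    simp only [coe_image, coe_univ, Set.image_univ, Set.mem_range] at ha hb
    obtain ⟨i, rfl⟩ := ha
    obtain ⟨j, rfl⟩ := hb
    exact hindep i j
  · rw [sum_image fun i _ j _ hij => hinj hij]
    simp only [hdeg, sum_const, card_univ, Fintype.card_fin, smul_eq_mul]
    omega

lemma card_compl_le_of_isTotalForcingSet [DecidableEq V] (h : IsTStructure T Δ P c)
    (hT : T.IsTree) {S : Finset V} (hS : IsTotalForcingSet T S) : #Sᶜ ≤ k := by
  have hsupp : ∀ i, IsStrongSupport T (c i) := h.2.2.2.2.2.2.1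
  have hcS : ∀ i, c i ∈ S := fun i => by exact_mod_cast hS.mem_of_isStrongSupport (hsupp i)
  calc #Sᶜ ≤ #(univ.image c) := hS.1.card_compl_le fun u x hux hx =>
        (h.mem_or_mem_of_adj hT hux).resolve_right fun hxc => by
          obtain ⟨i, -, rfl⟩ := mem_image.mp hxc
          exact hx (hcS i)
    _ ≤ k := card_image_le.trans (by simp)

lemma injective_leaf (h : IsTStructure T Δ P c) {ℓ : Fin k → V} (hleaf : ∀ i, IsLeaf T (ℓ i))
    (hadj : ∀ i, T.Adj (c i) (ℓ i)) : Function.Injective ℓ := fun i j hij =>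
  h.injective_center ((hleaf i).eq_of_adj (hadj i).symm (hij ▸ (hadj j).symm))

lemma isTotalForcingSet_sdiff_image [DecidableEq V] (h : IsTStructure T Δ P c) {ℓ : Fin k → V}
    (hleaf : ∀ i, IsLeaf T (ℓ i)) (hadj : ∀ i, T.Adj (c i) (ℓ i)) :
    IsTotalForcingSet T ↑(univ \ univ.image ℓ) := by
  have hinj := h.injective_center
  obtain ⟨hpart, -, -, hstar, -, -, hsupp, hindep⟩ := h
  have hmem : ∀ x, x ∈ (↑(univ \ univ.image ℓ) : Set V) ↔ ∀ j, x ≠ ℓ j := by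
    simp [eq_comm]
  have hcenter : ∀ i, c i ∈ (↑(univ \ univ.image ℓ) : Set V) := fun i => (hmem _).mpr
    fun j hij => hindep j i (hij ▸ hadj j)
  have hnbr : ∀ i x, T.Adj (c i) x → x ≠ ℓ i → x ∈ (↑(univ \ univ.image ℓ) : Set V) :=
    fun i x hix hx => (hmem x).mpr fun j hxj => hx <| by
      subst hxj
      rw [hinj ((hleaf j).eq_of_adj (hadj j).symm hix.symm)]
  refine ⟨isForcingSet_of_forall_notMem fun v hv => ?_, fun v hv => ?_⟩
  · obtain ⟨i, rfl⟩ : ∃ i, ℓ i = v := by simpa using hv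
    exact ⟨c i, hcenter i, hadj i, hnbr i⟩
  · obtain ⟨i, hvi, -⟩ := hpart v
    by_cases hvc : v = c i
    · subst hvc
      obtain ⟨x, y, hxy, hvx, hvy, -, -⟩ := hsupp i
      by_cases hx : x = ℓ i
      · exact ⟨y, hnbr i y hvy (hx ▸ hxy.symm), hvy⟩
      · exact ⟨x, hnbr i x hvx hx, hvx⟩
    · exact ⟨c i, hcenter i, (hstar i v hvi hvc).symm⟩

end IsTStructure

end TotalForcing

namespace TotalForcing

open Finset

theorem stmt5_general {V : Type*} [Fintype V] [DecidableEq V] (T : SimpleGraph V)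
    [DecidableRel T.Adj] (Δ k : ℕ)
    (P : Fin k → Finset V) (c : Fin k → V)
    (hT : T.IsTree) (hstruct : IsTStructure T Δ P c)
    (ℓ : Fin k → V) (hleaf : ∀ i, IsLeaf T (ℓ i)) (hadj : ∀ i, T.Adj (c i) (ℓ i)) :
    IsTotalForcingSet T
        ((Finset.univ \ Finset.image ℓ Finset.univ : Finset V) : Set V) ∧
      (Finset.univ \ Finset.image ℓ Finset.univ : Finset V).card =
        totalForcingNumber T := by
  have hS₀ := hstruct.isTotalForcingSet_sdiff_image hleaf hadj
  refine ⟨hS₀, (totalForcingNumber_eq_card hS₀ fun S hS => ?_).symm⟩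
  have hmissing := hstruct.card_compl_le_of_isTotalForcingSet hT hS
  rw [card_compl] at hmissing
  rw [card_sdiff_of_subset (subset_univ _), card_univ,
    card_image_of_injective _ (hstruct.injective_leaf hleaf hadj), card_univ, Fintype.card_fin]
  omega

/-- Let `T ∈ 𝒯_Δ` with underlying subtrees induced by `P 0, …, P (k-1)`
and central vertices `c 0, …, c (k-1)`. If `S` is obtained from `V(T)` by removing, for
each `i`, exactly one leaf neighbor `ℓ i` (in `T`) of the central vertex `c i`, then `S`
is a minimum total forcing set of `T`; in particular `|S| = F_t(T)`. -/
theorem stmt5 {V : Type*} [Fintype V] [DecidableEq V] (T : SimpleGraph V)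
    [DecidableRel T.Adj] (Δ k : ℕ) (hk : 0 < k)
    (P : Fin k → Finset V) (c : Fin k → V)
    (hT : T.IsTree) (hmax : T.maxDegree = Δ) (hstruct : IsTStructure T Δ P c)
    (ℓ : Fin k → V) (hleaf : ∀ i, IsLeaf T (ℓ i)) (hadj : ∀ i, T.Adj (c i) (ℓ i)) :
    IsTotalForcingSet T
        ((Finset.univ \ Finset.image ℓ Finset.univ : Finset V) : Set V) ∧
      (Finset.univ \ Finset.image ℓ Finset.univ : Finset V).card =
        totalForcingNumber T :=
  stmt5_general T Δ k P c hT hstruct ℓ hleaf hadj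

end TotalForcing
end

section
/- If T is a tree with at least two vertices and n_1 leaves, then F_t(T) ≥ n_1. -/
/-!
Run the forcing process in rounds and let every vertex outside `S` remember the neighbour that
forced it. A vertex forces at most once, so this forcer map is injective on the complement of `S`,
and exactly `|S|` vertices never force. A leaf never forces: its only neighbour would have to be
coloured before it, either because that neighbour forced the leaf or because the leaf lies in the
total forcing set `S` and needs a neighbour in `S`. Hence the leaves are among the `|S|` vertices
that never force.
-/

namespace TotalForcing

open Filter Finset

variable {V : Type*} {G : SimpleGraph V} {S : Set V}

def forcingStep (G : SimpleGraph V) (A : Set V) : Set V :=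
  A ∪ {v | ∃ u ∈ A, G.Adj u v ∧ ∀ w, G.Adj u w → w ≠ v → w ∈ A}

lemma monotone_iterate_forcingStep (G : SimpleGraph V) (S : Set V) :
    Monotone fun n => (forcingStep G)^[n] S :=
  fun _ _ hmn => Function.monotone_iterate_of_id_le (fun _ => Set.subset_union_left) hmn S

lemma Forces.eventually_mem_iterate [Finite V] {v : V} (h : Forces G S v) :
    ∀ᶠ n in atTop, v ∈ (forcingStep G)^[n] S := by
  induction h with
  | mem hv =>
    exact Eventually.of_forall fun n => monotone_iterate_forcingStep G S n.zero_le hv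
  | @force u v huv _ _ ihu ihw =>
    have hw : ∀ᶠ n in atTop, ∀ w, G.Adj u w → w ≠ v → w ∈ (forcingStep G)^[n] S :=
      eventually_all.2 fun w => by
        by_cases hw : G.Adj u w ∧ w ≠ v
        · exact (ihw w hw.1 hw.2).mono fun _ h _ _ => h
        · exact Eventually.of_forall fun _ h₁ h₂ => (hw ⟨h₁, h₂⟩).elim
    obtain ⟨N, hN⟩ := eventually_atTop.1 (ihu.and hw)
    refine eventually_atTop.2 ⟨N + 1, fun m hm => monotone_iterate_forcingStep G S hm ?_⟩
    show v ∈ (forcingStep G)^[N + 1] S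
    rw [Function.iterate_succ_apply']
    exact Or.inr ⟨u, (hN N le_rfl).1, huv, (hN N le_rfl).2⟩

structure ForcingChronology (G : SimpleGraph V) (S : Set V) where
  time : V → ℕ
  forcer : V → V
  adj_forcer : ∀ v ∉ S, G.Adj (forcer v) v
  time_forcer_lt : ∀ v ∉ S, time (forcer v) < time v
  time_lt_of_adj_forcer : ∀ v ∉ S, ∀ w, G.Adj (forcer v) w → w ≠ v → time w < time v

lemma IsForcingSet.nonempty_forcingChronology [Finite V] (hS : IsForcingSet G S) :
    Nonempty (ForcingChronology G S) := by
  classical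
  have hex : ∀ v, ∃ n, v ∈ (forcingStep G)^[n] S := fun v => (hS v).eventually_mem_iterate.exists
  let time v := Nat.find (hex v)
  have htime : ∀ v, ∃ u, v ∉ S → G.Adj u v ∧ time u < time v ∧
      ∀ w, G.Adj u w → w ≠ v → time w < time v := by
    intro v
    by_cases hv : v ∈ S
    · exact ⟨v, fun h => (h hv).elim⟩
    obtain ⟨k, hk⟩ : ∃ k, time v = k + 1 :=
      Nat.exists_eq_succ_of_ne_zero fun h0 => hv (by simpa [time, h0] using Nat.find_spec (hex v))
    have hin : v ∈ (forcingStep G)^[time v] S := Nat.find_spec (hex v)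
    have hout : v ∉ (forcingStep G)^[k] S := Nat.find_min (hex v) (show k < time v by omega)
    have hearlier : ∀ w ∈ (forcingStep G)^[k] S, time w < time v := fun w hw => by
      have : time w ≤ k := Nat.find_min' (hex w) hw
      omega
    rw [hk, Function.iterate_succ_apply'] at hin
    rcases hin with hin | ⟨u, hu, huv, hw⟩
    · exact (hout hin).elim
    · exact ⟨u, fun _ => ⟨huv, hearlier u hu, fun w h₁ h₂ => hearlier w (hw w h₁ h₂)⟩⟩
  choose forcer hforcer using htime
  exact ⟨⟨time, forcer, fun v hv => (hforcer v hv).1, fun v hv => (hforcer v hv).2.1,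
    fun v hv => (hforcer v hv).2.2⟩⟩

lemma IsLeaf.eq_of_adj_s6 {v a b : V} (hv : IsLeaf G v) (ha : G.Adj v a) (hb : G.Adj v b) :
    a = b := by
  obtain ⟨m, hm⟩ := Set.ncard_eq_one.1 hv
  have ha' : a ∈ G.neighborSet v := ha
  have hb' : b ∈ G.neighborSet v := hb
  rw [hm, Set.mem_singleton_iff] at ha' hb'
  rw [ha', hb']

namespace ForcingChronology

variable (c : ForcingChronology G S)

lemma injOn_forcer : Set.InjOn c.forcer Sᶜ := by
  have key : ∀ x ∉ S, ∀ y ∉ S, c.forcer x = c.forcer y → c.time x ≤ c.time y → x = y := by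
    intro x hx y hy hxy hle
    by_contra hne
    have hy' := c.time_lt_of_adj_forcer x hx y (hxy ▸ c.adj_forcer y hy) (Ne.symm hne)
    omega
  intro x hx y hy hxy
  rcases le_total (c.time x) (c.time y) with h | h
  · exact key x hx y hy hxy h
  · exact (key y hy x hx hxy.symm h).symm

lemma forcer_ne_of_isLeaf (hS : ∀ v ∈ S, ∃ u ∈ S, G.Adj v u) {x z : V} (hx : IsLeaf G x)
    (hz : z ∉ S) : c.forcer z ≠ x := by
  rintro rfl
  have hxz := c.adj_forcer z hz
  by_cases hxS : c.forcer z ∈ S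
  · obtain ⟨u, huS, hxu⟩ := hS _ hxS
    exact hz (hx.eq_of_adj_s6 hxu hxz ▸ huS)
  · have hforcer : c.forcer (c.forcer z) = z := hx.eq_of_adj_s6 (c.adj_forcer _ hxS).symm hxz
    have h₁ := c.time_forcer_lt z hz
    have h₂ := c.time_forcer_lt _ hxS
    rw [hforcer] at h₂
    omega

end ForcingChronology

theorem numLeaves_le_card_of_isTotalForcingSet [Fintype V] {S : Finset V}
    (hS : IsTotalForcingSet G S) : numLeaves G ≤ S.card := by
  classical
  obtain ⟨c⟩ := hS.1.nonempty_forcingChronology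
  have hinj : Set.InjOn c.forcer ↑Sᶜ := by
    rw [coe_compl]
    exact c.injOn_forcer
  have hleaves : {v | IsLeaf G v} ⊆ ↑(Sᶜ.image c.forcer)ᶜ := by
    intro x hx
    simp only [coe_compl, coe_image, Set.mem_compl_iff, Set.mem_image, mem_coe,
      not_exists, not_and]
    exact fun z hz => c.forcer_ne_of_isLeaf hS.2 hx hz
  calc numLeaves G ≤ (Sᶜ.image c.forcer)ᶜ.card :=
        (Set.ncard_le_ncard hleaves (Finset.finite_toSet _)).trans_eq (Set.ncard_coe_finset _)
    _ = S.card := by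
      rw [card_compl, card_image_of_injOn hinj, card_compl, Nat.sub_sub_self (card_le_univ S)]

lemma isTotalForcingSet_univ (h : ∀ v, ∃ u, G.Adj v u) : IsTotalForcingSet G Set.univ :=
  ⟨fun _ => .mem trivial, fun v _ => (h v).imp fun _ hu => ⟨trivial, hu⟩⟩

theorem numLeaves_le_totalForcingNumber [Fintype V] (h : ∀ v, ∃ u, G.Adj v u) :
    numLeaves G ≤ totalForcingNumber G := by
  classical
  refine le_csInf ⟨_, univ, rfl, by rw [coe_univ]; exact isTotalForcingSet_univ h⟩ ?_
  rintro _ ⟨S, rfl, hS⟩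
  exact numLeaves_le_card_of_isTotalForcingSet hS

end TotalForcing

namespace TotalForcing

/-- If `T` is a tree with at least two vertices and `n₁` leaves,
then `F_t(T) ≥ n₁`. -/
theorem stmt6 {V : Type*} [Fintype V] (T : SimpleGraph V)
    (hT : T.IsTree) (h2 : 2 ≤ Fintype.card V) :
    numLeaves T ≤ totalForcingNumber T := by
  have : Nontrivial V := Fintype.one_lt_card_iff_nontrivial.1 h2
  exact numLeaves_le_totalForcingNumber hT.connected.preconnected.exists_adj_of_nontrivial

end TotalForcing
end

section
/- If T is a tree in the family F with n_1 leaves, then F_t(T) = n_1. -/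
namespace TotalForcing

/-- Operation `𝒪₁`: subdivide the edge `uv` once (the new vertex is `none`). -/
def subdivide1 {V : Type*} (G : SimpleGraph V) (u v : V) : SimpleGraph (Option V) :=
  SimpleGraph.fromRel (fun x y =>
    (∃ a b : V, x = some a ∧ y = some b ∧ G.Adj a b ∧
      ¬(a = u ∧ b = v) ∧ ¬(a = v ∧ b = u)) ∨
    (x = none ∧ (y = some u ∨ y = some v)))

/-- Operation `𝒪₂`: add one new pendant edge at `v` (the new leaf is `none`). -/
def addLeaf {V : Type*} (G : SimpleGraph V) (v : V) : SimpleGraph (Option V) :=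
  SimpleGraph.fromRel (fun x y =>
    (∃ a b : V, x = some a ∧ y = some b ∧ G.Adj a b) ∨ (x = none ∧ y = some v))

/-- Operation `𝒪₃`: add two new pendant edges at `v`. -/
def addTwoLeaves {V : Type*} (G : SimpleGraph V) (v : V) : SimpleGraph (V ⊕ Fin 2) :=
  SimpleGraph.fromRel (fun x y =>
    (∃ a b : V, x = Sum.inl a ∧ y = Sum.inl b ∧ G.Adj a b) ∨
    (∃ t : Fin 2, x = Sum.inl v ∧ y = Sum.inr t))

/-- Operation `𝒪₄`: add a new path on three vertices `inr 0 – inr 1 – inr 2` and join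
`v` to its central vertex `inr 1`. -/
def addP3 {V : Type*} (G : SimpleGraph V) (v : V) : SimpleGraph (V ⊕ Fin 3) :=
  SimpleGraph.fromRel (fun x y =>
    (∃ a b : V, x = Sum.inl a ∧ y = Sum.inl b ∧ G.Adj a b) ∨
    (x = Sum.inr 1 ∧ (y = Sum.inr 0 ∨ y = Sum.inr 2 ∨ y = Sum.inl v)))

/-- Operation `𝒪₅`: add six new vertices `u₁ = inr 0`, `v₁ = inr 1`, `v₂ = inr 2`,
`v₃ = inr 3`, `v₄ = inr 4`, `u₃ = inr 5` with edges `v₁u₁, v₁v₂, v₂v₃, v₃v₄, v₃u₃`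
(a star `K_{1,3}` with one edge subdivided twice), and join `v` to `v₁`. -/
def addSubdividedStar {V : Type*} (G : SimpleGraph V) (v : V) :
    SimpleGraph (V ⊕ Fin 6) :=
  SimpleGraph.fromRel (fun x y =>
    (∃ a b : V, x = Sum.inl a ∧ y = Sum.inl b ∧ G.Adj a b) ∨
    (x = Sum.inr 1 ∧ (y = Sum.inr 0 ∨ y = Sum.inr 2 ∨ y = Sum.inl v)) ∨
    (x = Sum.inr 3 ∧ (y = Sum.inr 2 ∨ y = Sum.inr 4 ∨ y = Sum.inr 5)))

/-- The family `ℱ`: the smallest family of graphs (up to isomorphism) containing the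
path `P₂` and closed under the operations `𝒪₁`–`𝒪₅`. -/
inductive InFamilyF : {V : Type} → SimpleGraph V → Prop
  | base : InFamilyF (SimpleGraph.pathGraph 2)
  | iso {V W : Type} {G : SimpleGraph V} {H : SimpleGraph W} :
      InFamilyF G → G ≃g H → InFamilyF H
  | op1 {V : Type} {G : SimpleGraph V} (u v : V) : InFamilyF G → G.Adj u v →
      ((G.neighborSet u).ncard ≤ 2 ∨ (G.neighborSet v).ncard ≤ 2) →
      InFamilyF (subdivide1 G u v)
  | op2 {V : Type} {G : SimpleGraph V} (v : V) : InFamilyF G →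
      IsStrongSupport G v → InFamilyF (addLeaf G v)
  | op3 {V : Type} {G : SimpleGraph V} (w v : V) : InFamilyF G →
      IsStrongSupport G w → G.Adj w v → IsLeaf G v → InFamilyF (addTwoLeaves G v)
  | op4 {V : Type} {G : SimpleGraph V} (v : V) : InFamilyF G →
      2 ≤ (G.neighborSet v).ncard → InFamilyF (addP3 G v)
  | op5 {V : Type} {G : SimpleGraph V} (v : V) : InFamilyF G →
      2 ≤ (G.neighborSet v).ncard → InFamilyF (addSubdividedStar G v)

end TotalForcing

/-!
Lower bound: in a chronological list of forces from a total forcing set `S`, distinct vertices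
have distinct forcers and no leaf ever forces, so the `|V| - |S|` forcers are among the
`|V| - n₁` non-leaves, whence `n₁ ≤ |S|`.

Upper bound: along the construction of a tree of `ℱ`, a total forcing set of size `n₁` is
extended through each operation. `𝒪₂`–`𝒪₅` attach as many new colored vertices as new leaves
(for `𝒪₃` after swapping two leaves at the strong support vertex so that `v` is colored). For
`𝒪₁` the same set works, except when an endpoint of the subdivided edge is colored and has its
only colored neighbor across that edge; then the subdivision vertex replaces it.
-/

namespace TotalForcing

open Function

variable {V W : Type*} {G : SimpleGraph V} {H : SimpleGraph W} {S : Set V}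

lemma IsLeaf.eq_of_adj_s8 {x y z : V} (hx : IsLeaf G x) (hy : G.Adj x y) (hz : G.Adj x z) :
    y = z := by
  obtain ⟨c, hc⟩ := Set.ncard_eq_one.mp hx
  have hy' : y ∈ G.neighborSet x := hy
  have hz' : z ∈ G.neighborSet x := hz
  rw [hc] at hy' hz'
  exact hy'.trans hz'.symm

lemma not_isLeaf_of_adj {x y z : V} (hy : G.Adj x y) (hz : G.Adj x z) (hyz : y ≠ z) :
    ¬IsLeaf G x :=
  fun hx => hyz (hx.eq_of_adj_s8 hy hz)

lemma isLeaf_iff_of_adj {x y : V} (hy : G.Adj x y) :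
    IsLeaf G x ↔ ∀ z, G.Adj x z → z = y := by
  refine ⟨fun hx z hz => hx.eq_of_adj_s8 hz hy, fun h => Set.ncard_eq_one.mpr ⟨y, ?_⟩⟩
  ext z
  exact ⟨h z, fun hz => hz ▸ hy⟩

lemma isLeaf_iff_of_neighborSet_eq_image {φ : V → W} (hφ : Injective φ) {a : V}
    (h : H.neighborSet (φ a) = φ '' G.neighborSet a) : IsLeaf H (φ a) ↔ IsLeaf G a := by
  rw [IsLeaf, IsLeaf, h, Set.ncard_image_of_injective _ hφ]

lemma isLeaf_embedding_iff (φ : G ↪g H) {a : V}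
    (h : H.neighborSet (φ a) ⊆ Set.range φ) : IsLeaf H (φ a) ↔ IsLeaf G a := by
  refine isLeaf_iff_of_neighborSet_eq_image φ.injective (Set.Subset.antisymm ?_ ?_)
  · intro y hy
    obtain ⟨b, rfl⟩ := h hy
    exact ⟨b, φ.map_adj_iff.mp hy, rfl⟩
  · rintro _ ⟨b, hb, rfl⟩
    exact φ.map_adj_iff.mpr hb

lemma ncard_image_union [Finite W] {φ : V → W} (hφ : Injective φ) (L : Set V) {N : Set W}
    (hN : Disjoint (Set.range φ) N) : (φ '' L ∪ N).ncard = L.ncard + N.ncard := by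
  rw [Set.ncard_union_eq (hN.mono_left (Set.image_subset_range φ L)),
    Set.ncard_image_of_injective L hφ]

lemma numLeaves_eq_ncard_add_ncard [Finite W] (φ : V ↪ W) {L : Set V} {N : Set W}
    (hold : ∀ a, IsLeaf H (φ a) ↔ a ∈ L) (hnew : ∀ y ∉ Set.range φ, IsLeaf H y ↔ y ∈ N)
    (hN : Disjoint (Set.range φ) N) : numLeaves H = L.ncard + N.ncard := by
  rw [numLeaves, ← ncard_image_union φ.injective L hN]
  congr 1
  ext y
  by_cases hy : y ∈ Set.range φ
  · obtain ⟨a, rfl⟩ := hy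
    simp [hold, Set.disjoint_left.mp hN (Set.mem_range_self a)]
  · rw [Set.mem_union, or_iff_right fun ⟨_, _, h⟩ => hy ⟨_, h⟩]
    exact hnew y hy

def forcingStage (G : SimpleGraph V) (S : Set V) : ℕ → Set V
  | 0 => S
  | n + 1 => forcingStage G S n ∪
      {x | ∃ u ∈ forcingStage G S n, G.Adj u x ∧
        ∀ w, G.Adj u w → w ≠ x → w ∈ forcingStage G S n}

lemma forcingStage_mono : Monotone (forcingStage G S) :=
  monotone_nat_of_le_succ fun _ => Set.subset_union_left

lemma exists_forces_subset_forcingStage [Finite V] :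
    ∃ n, ∀ x, Forces G S x → x ∈ forcingStage G S n := by
  obtain ⟨n, hn⟩ := WellFoundedGT.monotone_chain_condition ⟨_, forcingStage_mono (G := G) (S := S)⟩
  refine ⟨n, fun x hx => ?_⟩
  induction hx with
  | mem h => exact forcingStage_mono (Nat.zero_le n) h
  | force hadj _ _ hu hw =>
    have hstable : forcingStage G S (n + 1) = forcingStage G S n := (hn (n + 1) n.le_succ).symm
    exact hstable ▸ Or.inr ⟨_, hu, hadj, hw⟩

structure ChronologicalForcing (G : SimpleGraph V) (S : Set V) where
  forcer : V → V
  time : V → ℕ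
  adj_forcer : ∀ x ∉ S, G.Adj (forcer x) x
  time_forcer_lt : ∀ x ∉ S, time (forcer x) < time x
  time_lt_of_adj_forcer : ∀ x ∉ S, ∀ w, G.Adj (forcer x) w → w ≠ x → time w < time x

lemma IsForcingSet.nonempty_chronologicalForcing [Finite V] (hS : IsForcingSet G S) :
    Nonempty (ChronologicalForcing G S) := by
  classical
  obtain ⟨n, hn⟩ := exists_forces_subset_forcingStage (G := G) (S := S)
  have hex : ∀ x, ∃ m, x ∈ forcingStage G S m := fun x => ⟨n, hn x (hS x)⟩
  have hforcer : ∀ x, ∃ u, x ∉ S → G.Adj u x ∧ Nat.find (hex u) < Nat.find (hex x) ∧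
      ∀ w, G.Adj u w → w ≠ x → Nat.find (hex w) < Nat.find (hex x) := by
    intro x
    by_cases hxS : x ∈ S
    · exact ⟨x, fun h => absurd hxS h⟩
    have hmem := Nat.find_spec (hex x)
    obtain ⟨m, hm⟩ : ∃ m, Nat.find (hex x) = m + 1 :=
      Nat.exists_eq_succ_of_ne_zero fun h => hxS (by rw [h] at hmem; exact hmem)
    rw [hm] at hmem
    have hnot : x ∉ forcingStage G S m := Nat.find_min (hex x) (by omega)
    obtain ⟨u, hu, hux, hw⟩ := hmem.resolve_left hnot
    refine ⟨u, fun _ => ⟨hux, ?_, fun w huw hwx => ?_⟩⟩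
    · exact hm ▸ Nat.lt_succ_of_le (Nat.find_min' _ hu)
    · exact hm ▸ Nat.lt_succ_of_le (Nat.find_min' _ (hw w huw hwx))
  choose forcer hforcer using hforcer
  exact ⟨⟨forcer, fun x => Nat.find (hex x), fun x hx => (hforcer x hx).1,
    fun x hx => (hforcer x hx).2.1, fun x hx => (hforcer x hx).2.2⟩⟩

namespace ChronologicalForcing

variable (c : ChronologicalForcing G S)

lemma injOn_forcer : Set.InjOn c.forcer Sᶜ := by
  intro a ha b hb hab
  by_contra hne
  have h₁ := c.time_lt_of_adj_forcer a ha b (hab ▸ c.adj_forcer b hb) (Ne.symm hne)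
  have h₂ := c.time_lt_of_adj_forcer b hb a (hab ▸ c.adj_forcer a ha) hne
  omega

/-- A leaf in `S` has its only neighbor in `S`; a leaf outside `S` was forced by its only
neighbor. -/
lemma not_isLeaf_forcer (hS : ∀ v ∈ S, ∃ u ∈ S, G.Adj v u) {x : V} (hx : x ∉ S) :
    ¬IsLeaf G (c.forcer x) := by
  intro hleaf
  have hadj := c.adj_forcer x hx
  by_cases hfS : c.forcer x ∈ S
  · obtain ⟨u, huS, hu⟩ := hS _ hfS
    exact hx (hleaf.eq_of_adj_s8 hu hadj ▸ huS)
  · have hff : c.forcer (c.forcer x) = x := hleaf.eq_of_adj_s8 (c.adj_forcer _ hfS).symm hadj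
    have h₁ := c.time_forcer_lt _ hfS
    have h₂ := c.time_forcer_lt x hx
    rw [hff] at h₁
    omega

end ChronologicalForcing

lemma IsTotalForcingSet.numLeaves_le [Finite V] (hS : IsTotalForcingSet G S) :
    numLeaves G ≤ S.ncard := by
  obtain ⟨c⟩ := hS.1.nonempty_chronologicalForcing
  have hmaps : Set.MapsTo c.forcer Sᶜ {a | IsLeaf G a}ᶜ :=
    fun x hx => c.not_isLeaf_forcer hS.2 hx
  have hle := Set.ncard_le_ncard_of_injOn c.forcer hmaps c.injOn_forcer
  have h₁ := Set.ncard_add_ncard_compl S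
  have h₂ := Set.ncard_add_ncard_compl {a | IsLeaf G a}
  rw [numLeaves]
  omega

lemma IsForcingSet.exists_isLeaf_mem [Finite V] (hS : IsForcingSet G S) {w : V}
    (hw : IsStrongSupport G w) : ∃ z ∈ S, IsLeaf G z ∧ G.Adj w z := by
  obtain ⟨x, y, hxy, hwx, hwy, hx, hy⟩ := hw
  by_contra! h
  obtain ⟨c⟩ := hS.nonempty_chronologicalForcing
  have hxS : x ∉ S := fun hxS => h x hxS hx hwx
  have hyS : y ∉ S := fun hyS => h y hyS hy hwy
  refine hxy (c.injOn_forcer hxS hyS ?_)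
  rw [hx.eq_of_adj_s8 (c.adj_forcer x hxS).symm hwx.symm,
    hy.eq_of_adj_s8 (c.adj_forcer y hyS).symm hwy.symm]

lemma IsTotalForcingSet.mem_of_isStrongSupport_s8 [Finite V] (hS : IsTotalForcingSet G S)
    {w : V} (hw : IsStrongSupport G w) : w ∈ S := by
  obtain ⟨z, hzS, hz, hwz⟩ := hS.1.exists_isLeaf_mem hw
  obtain ⟨u, huS, hzu⟩ := hS.2 z hzS
  exact hz.eq_of_adj_s8 hzu hwz.symm ▸ huS

lemma Forces.of_embedding (φ : G ↪g H) {S' : Set W} (hS : ∀ s ∈ S, Forces H S' (φ s))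
    (hnew : ∀ a y, H.Adj (φ a) y → y ∉ Set.range φ → Forces H S' y) {x : V}
    (hx : Forces G S x) : Forces H S' (φ x) := by
  induction hx with
  | mem h => exact hS _ h
  | @force u x hux _ _ ihu ihw =>
    refine Forces.force (φ.map_adj_iff.mpr hux) ihu fun y hy hyx => ?_
    by_cases hyφ : y ∈ Set.range φ
    · obtain ⟨b, rfl⟩ := hyφ
      exact ihw b (φ.map_adj_iff.mp hy) (fun h => hyx (h ▸ rfl))
    · exact hnew u y hy hyφ

lemma IsTotalForcingSet.of_embedding (φ : G ↪g H) (hS : IsTotalForcingSet G S) {N : Set W}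
    (hN : ∀ y ∈ N, ∃ z ∈ φ '' S ∪ N, H.Adj y z)
    (hnew : ∀ a y, H.Adj (φ a) y → y ∉ Set.range φ → Forces H (φ '' S ∪ N) y)
    (hrest : (∀ a, Forces H (φ '' S ∪ N) (φ a)) →
      ∀ y ∉ Set.range φ, Forces H (φ '' S ∪ N) y) :
    IsTotalForcingSet H (φ '' S ∪ N) := by
  have hold : ∀ a, Forces H (φ '' S ∪ N) (φ a) := fun a =>
    (hS.1 a).of_embedding φ (fun s hs => Forces.mem (Or.inl ⟨s, hs, rfl⟩)) hnew
  refine ⟨fun y => ?_, ?_⟩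
  · by_cases hy : y ∈ Set.range φ
    · obtain ⟨a, rfl⟩ := hy
      exact hold a
    · exact hrest hold y hy
  · rintro y (⟨s, hs, rfl⟩ | hy)
    · obtain ⟨t, ht, hst⟩ := hS.2 s hs
      exact ⟨φ t, Or.inl ⟨t, ht, rfl⟩, φ.map_adj_iff.mpr hst⟩
    · exact hN y hy

lemma IsTotalForcingSet.image_iso (e : G ≃g H) (hS : IsTotalForcingSet G S) :
    IsTotalForcingSet H (e '' S) := by
  have hrange : ∀ y, y ∈ Set.range e.toEmbedding := e.surjective
  simpa using hS.of_embedding e.toEmbedding (N := ∅) (by simp)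
    (fun _ y _ hy => absurd (hrange y) hy) (fun _ y hy => absurd (hrange y) hy)

lemma numLeaves_iso [Finite W] (e : G ≃g H) : numLeaves H = numLeaves G := by
  have hrange : ∀ y, y ∈ Set.range e.toEmbedding := e.surjective
  rw [numLeaves_eq_ncard_add_ncard e.toEmbedding.toEmbedding (L := {a | IsLeaf G a}) (N := ∅)
    (fun a => isLeaf_embedding_iff e.toEmbedding fun y _ => hrange y)
    (fun y hy => absurd (hrange y) hy) (by simp), Set.ncard_empty, add_zero, numLeaves]

lemma adj_swap_iff_of_isLeaf [DecidableEq V] {v z w : V} (hv : IsLeaf G v) (hz : IsLeaf G z)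
    (hwv : G.Adj w v) (hwz : G.Adj w z) {a b : V} :
    G.Adj (Equiv.swap v z a) (Equiv.swap v z b) ↔ G.Adj a b := by
  have hv' : ∀ c, G.Adj c v ↔ c = w := fun c =>
    ⟨fun h => hv.eq_of_adj_s8 h.symm hwv.symm, (· ▸ hwv)⟩
  have hz' : ∀ c, G.Adj c z ↔ c = w := fun c =>
    ⟨fun h => hz.eq_of_adj_s8 h.symm hwz.symm, (· ▸ hwz)⟩
  have hv'' : ∀ c, G.Adj v c ↔ c = w := fun c => G.adj_comm v c |>.trans (hv' c)
  have hz'' : ∀ c, G.Adj z c ↔ c = w := fun c => G.adj_comm z c |>.trans (hz' c)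
  have hvw : v ≠ w := hwv.ne.symm
  have hzw : z ≠ w := hwz.ne.symm
  rw [Equiv.swap_apply_def, Equiv.swap_apply_def]
  split_ifs <;> subst_vars <;> simp_all

lemma IsTotalForcingSet.exists_mem_isLeaf [Finite V] (hS : IsTotalForcingSet G S) {v w : V}
    (hw : IsStrongSupport G w) (hv : IsLeaf G v) (hwv : G.Adj w v) :
    ∃ S₂, IsTotalForcingSet G S₂ ∧ S₂.ncard = S.ncard ∧ v ∈ S₂ := by
  classical
  obtain ⟨z, hzS, hz, hwz⟩ := hS.1.exists_isLeaf_mem hw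
  let e : G ≃g G := ⟨Equiv.swap v z, adj_swap_iff_of_isLeaf hv hz hwv hwz⟩
  exact ⟨e '' S, hS.image_iso e, Set.ncard_image_of_injective S e.injective,
    ⟨z, hzS, Equiv.swap_apply_right v z⟩⟩

lemma exists_adj_of_two_le_ncard {v : V} (hv : 2 ≤ (G.neighborSet v).ncard) :
    ∃ x, G.Adj v x :=
  Set.nonempty_of_ncard_ne_zero (s := G.neighborSet v) (by omega)

lemma not_isLeaf_of_two_le_ncard {v : V} (hv : 2 ≤ (G.neighborSet v).ncard) :
    ¬IsLeaf G v := by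
  rw [IsLeaf]
  omega

lemma isLeaf_embedding_iff_of_attached (φ : G ↪g H) {v x : V} {y : W} (hx : G.Adj v x)
    (hv : ¬IsLeaf G v) (hy : H.Adj (φ v) y) (hyφ : y ∉ Set.range φ)
    (hnbr : ∀ a ≠ v, H.neighborSet (φ a) ⊆ Set.range φ) (a : V) :
    IsLeaf H (φ a) ↔ IsLeaf G a := by
  by_cases hav : a = v
  · subst hav
    refine iff_of_false (not_isLeaf_of_adj (φ.map_adj_iff.mpr hx) hy ?_) hv
    exact fun h => hyφ ⟨x, h⟩
  · exact isLeaf_embedding_iff φ (hnbr a hav)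

lemma numLeaves_pathGraph_two : numLeaves (SimpleGraph.pathGraph 2) = 2 := by
  have hleaf : ∀ i : Fin 2, IsLeaf (SimpleGraph.pathGraph 2) i := by
    intro i
    rw [isLeaf_iff_of_adj (y := 1 - i) (by fin_cases i <;> simp [SimpleGraph.pathGraph_adj])]
    intro z hz
    fin_cases i <;> fin_cases z <;> simp_all [SimpleGraph.pathGraph_adj]
  simp [numLeaves, hleaf]

lemma isTotalForcingSet_pathGraph_two :
    IsTotalForcingSet (SimpleGraph.pathGraph 2) Set.univ :=
  ⟨fun _ => Forces.mem trivial,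
    fun i _ => ⟨1 - i, trivial, by fin_cases i <;> simp [SimpleGraph.pathGraph_adj]⟩⟩

section AddLeaf

variable {v : V}

@[simp]
lemma addLeaf_adj_some_some {a b : V} : (addLeaf G v).Adj (some a) (some b) ↔ G.Adj a b := by
  simp [addLeaf]
  grind [SimpleGraph.adj_comm, SimpleGraph.Adj.ne]

@[simp]
lemma addLeaf_adj_none_some {b : V} : (addLeaf G v).Adj none (some b) ↔ b = v := by
  simp [addLeaf]

@[simp]
lemma addLeaf_adj_some_none {a : V} : (addLeaf G v).Adj (some a) none ↔ a = v := by
  simp [addLeaf]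

variable (G v) in
@[simps!]
def addLeafEmbedding : G ↪g addLeaf G v := ⟨Function.Embedding.some, addLeaf_adj_some_some⟩

lemma isTotalForcingSet_addLeaf [Finite V] (hS : IsTotalForcingSet G S)
    (hv : IsStrongSupport G v) : IsTotalForcingSet (addLeaf G v) (some '' S ∪ {none}) := by
  refine hS.of_embedding (addLeafEmbedding G v) ?_ ?_ ?_
  · rintro _ rfl
    exact ⟨some v, Or.inl ⟨v, hS.mem_of_isStrongSupport_s8 hv, rfl⟩, by simp⟩
  · rintro a (_ | b) - hy
    · exact Forces.mem (Or.inr rfl)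
    · exact absurd ⟨b, rfl⟩ hy
  · rintro - (_ | b) hy
    · exact Forces.mem (Or.inr rfl)
    · exact absurd ⟨b, rfl⟩ hy

lemma numLeaves_addLeaf [Finite V] {x : V} (hx : G.Adj v x) (hv : ¬IsLeaf G v) :
    numLeaves (addLeaf G v) = numLeaves G + 1 := by
  have hnone : IsLeaf (addLeaf G v) none := by
    rw [isLeaf_iff_of_adj (addLeaf_adj_none_some.mpr rfl)]
    rintro (_ | b) h <;> simp_all
  refine (numLeaves_eq_ncard_add_ncard (addLeafEmbedding G v).toEmbedding
    (L := {a | IsLeaf G a}) (N := {none})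
    (isLeaf_embedding_iff_of_attached _ hx hv (y := none) (by simp) (by simp) ?_) ?_ ?_).trans
      (by rw [Set.ncard_singleton, numLeaves])
  · rintro a ha (_ | b) h
    · exact absurd (addLeaf_adj_some_none.mp h) ha
    · exact ⟨b, rfl⟩
  · rintro (_ | b) hb
    · simpa using hnone
    · exact absurd ⟨b, rfl⟩ hb
  · simp

end AddLeaf

section AddTwoLeaves

variable {v : V}

@[simp]
lemma addTwoLeaves_adj_inl_inl {a b : V} :
    (addTwoLeaves G v).Adj (Sum.inl a) (Sum.inl b) ↔ G.Adj a b := by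
  simp [addTwoLeaves]
  grind [SimpleGraph.adj_comm, SimpleGraph.Adj.ne]

@[simp]
lemma addTwoLeaves_adj_inl_inr {a : V} {t : Fin 2} :
    (addTwoLeaves G v).Adj (Sum.inl a) (Sum.inr t) ↔ a = v := by
  fin_cases t <;> simp [addTwoLeaves]

@[simp]
lemma addTwoLeaves_adj_inr_inl {a : V} {t : Fin 2} :
    (addTwoLeaves G v).Adj (Sum.inr t) (Sum.inl a) ↔ a = v := by
  fin_cases t <;> simp [addTwoLeaves]

@[simp]
lemma not_addTwoLeaves_adj_inr_inr {s t : Fin 2} :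
    ¬(addTwoLeaves G v).Adj (Sum.inr s) (Sum.inr t) := by
  simp [addTwoLeaves]

variable (G v) in
@[simps!]
def addTwoLeavesEmbedding : G ↪g addTwoLeaves G v :=
  ⟨Function.Embedding.inl, addTwoLeaves_adj_inl_inl⟩

lemma isTotalForcingSet_addTwoLeaves (hS : IsTotalForcingSet G S) (hvS : v ∈ S)
    (hnbr : ∀ b, G.Adj v b → b ∈ S) :
    IsTotalForcingSet (addTwoLeaves G v) (Sum.inl '' S ∪ {Sum.inr 0}) := by
  have hinr : ∀ t, Forces (addTwoLeaves G v) (Sum.inl '' S ∪ {Sum.inr 0}) (Sum.inr t) := by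
    intro t
    fin_cases t
    · exact Forces.mem (by simp)
    refine Forces.force (u := Sum.inl v) (by simp) (Forces.mem (by simp [hvS])) ?_
    rintro (b | s) hb hbt
    · exact Forces.mem (by simp_all)
    · fin_cases s
      · exact Forces.mem (by simp)
      · exact absurd rfl hbt
  refine hS.of_embedding (addTwoLeavesEmbedding G v) ?_ ?_ ?_
  · rintro _ rfl
    exact ⟨Sum.inl v, Or.inl ⟨v, hvS, rfl⟩, by simp⟩
  · rintro a (b | t) - hy
    · exact absurd ⟨b, rfl⟩ hy
    · exact hinr t
  · rintro - (b | t) hy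
    · exact absurd ⟨b, rfl⟩ hy
    · exact hinr t

lemma numLeaves_addTwoLeaves [Finite V] (hv : IsLeaf G v) :
    numLeaves (addTwoLeaves G v) = numLeaves G + 1 := by
  have hinr : ∀ t, IsLeaf (addTwoLeaves G v) (Sum.inr t) := by
    intro t
    rw [isLeaf_iff_of_adj (addTwoLeaves_adj_inr_inl.mpr rfl)]
    rintro (b | s) h <;> simp_all
  have hold : ∀ a, IsLeaf (addTwoLeaves G v) (Sum.inl a) ↔ a ∈ {a | IsLeaf G a} \ {v} := by
    intro a
    by_cases hav : a = v
    · subst hav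
      simpa using not_isLeaf_of_adj (addTwoLeaves_adj_inl_inr (t := 0).mpr rfl)
        (addTwoLeaves_adj_inl_inr (t := 1).mpr rfl) (by simp)
    · refine (isLeaf_embedding_iff (addTwoLeavesEmbedding G v) ?_).trans (by simp [hav])
      rintro (b | t) h
      · exact ⟨b, rfl⟩
      · exact absurd (addTwoLeaves_adj_inl_inr.mp h) hav
  rw [numLeaves_eq_ncard_add_ncard (addTwoLeavesEmbedding G v).toEmbedding hold
      (N := {Sum.inr 0, Sum.inr 1}) ?_ (by simp), Set.ncard_pair (by simp), numLeaves]
  · have := Set.ncard_sdiff_singleton_add_one (s := {a | IsLeaf G a}) hv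
    omega
  rintro (b | t) hy
  · exact absurd ⟨b, rfl⟩ hy
  · fin_cases t <;> simp [hinr]

end AddTwoLeaves

section AddP3

variable {v : V}

@[simp]
lemma addP3_adj_inl_inl {a b : V} : (addP3 G v).Adj (Sum.inl a) (Sum.inl b) ↔ G.Adj a b := by
  simp [addP3]
  grind [SimpleGraph.adj_comm, SimpleGraph.Adj.ne]

@[simp]
lemma addP3_adj_inl_inr {a : V} {i : Fin 3} :
    (addP3 G v).Adj (Sum.inl a) (Sum.inr i) ↔ a = v ∧ i = 1 := by
  simp [addP3, and_comm]

@[simp]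
lemma addP3_adj_inr_inl {a : V} {i : Fin 3} :
    (addP3 G v).Adj (Sum.inr i) (Sum.inl a) ↔ a = v ∧ i = 1 := by
  simp [addP3, and_comm]

variable (G v) in
@[simps!]
def addP3Embedding : G ↪g addP3 G v := ⟨Function.Embedding.inl, addP3_adj_inl_inl⟩

lemma isTotalForcingSet_addP3 (hS : IsTotalForcingSet G S) :
    IsTotalForcingSet (addP3 G v) (Sum.inl '' S ∪ {Sum.inr 0, Sum.inr 1}) := by
  refine hS.of_embedding (addP3Embedding G v) ?_ ?_ ?_
  · rintro _ (rfl | rfl)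
    · exact ⟨Sum.inr 1, by simp, by simp [addP3]⟩
    · exact ⟨Sum.inr 0, by simp, by simp [addP3]⟩
  · rintro a (b | i) h hy
    · exact absurd ⟨b, rfl⟩ hy
    · exact Forces.mem (by simp_all)
  · rintro hold (b | i) hy
    · exact absurd ⟨b, rfl⟩ hy
    fin_cases i
    · exact Forces.mem (by simp)
    · exact Forces.mem (by simp)
    refine Forces.force (u := Sum.inr 1) (by simp [addP3]) (Forces.mem (by simp)) ?_
    rintro (b | j) h hne
    · simp only [addP3_adj_inr_inl] at h
      exact h.1 ▸ hold v
    · fin_cases j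
      · exact Forces.mem (by simp)
      · simp [addP3] at h
      · exact absurd rfl hne

lemma numLeaves_addP3 [Finite V] {x : V} (hx : G.Adj v x) (hv : ¬IsLeaf G v) :
    numLeaves (addP3 G v) = numLeaves G + 2 := by
  have hend : ∀ i : Fin 3, i ≠ 1 → IsLeaf (addP3 G v) (Sum.inr i) := by
    intro i hi
    rw [isLeaf_iff_of_adj (y := Sum.inr 1) (by fin_cases i <;> simp_all [addP3])]
    rintro (b | j) h
    · simp_all
    · fin_cases i <;> fin_cases j <;> simp_all [addP3]
  refine (numLeaves_eq_ncard_add_ncard (addP3Embedding G v).toEmbedding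
    (L := {a | IsLeaf G a}) (N := {Sum.inr 0, Sum.inr 2})
    (isLeaf_embedding_iff_of_attached _ hx hv (y := Sum.inr 1) (by simp) (by simp) ?_) ?_
    (by simp)).trans (by rw [Set.ncard_pair (by simp), numLeaves])
  · rintro a ha (b | i) h
    · exact ⟨b, rfl⟩
    · exact absurd (addP3_adj_inl_inr.mp h).1 ha
  · rintro (b | i) hy
    · exact absurd ⟨b, rfl⟩ hy
    fin_cases i
    · simpa using hend 0 (by decide)
    · simpa using not_isLeaf_of_adj (y := Sum.inr 0) (z := Sum.inr 2) (by simp [addP3])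
        (by simp [addP3]) (by simp)
    · simpa using hend 2 (by decide)

end AddP3

section AddSubdividedStar

variable {v : V}

@[simp]
lemma addSubdividedStar_adj_inl_inl {a b : V} :
    (addSubdividedStar G v).Adj (Sum.inl a) (Sum.inl b) ↔ G.Adj a b := by
  simp [addSubdividedStar]
  grind [SimpleGraph.adj_comm, SimpleGraph.Adj.ne]

@[simp]
lemma addSubdividedStar_adj_inl_inr {a : V} {i : Fin 6} :
    (addSubdividedStar G v).Adj (Sum.inl a) (Sum.inr i) ↔ a = v ∧ i = 1 := by
  simp [addSubdividedStar, and_comm]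

@[simp]
lemma addSubdividedStar_adj_inr_inl {a : V} {i : Fin 6} :
    (addSubdividedStar G v).Adj (Sum.inr i) (Sum.inl a) ↔ a = v ∧ i = 1 := by
  simp [addSubdividedStar, and_comm]

variable (G v) in
@[simps!]
def addSubdividedStarEmbedding : G ↪g addSubdividedStar G v :=
  ⟨Function.Embedding.inl, addSubdividedStar_adj_inl_inl⟩

lemma isTotalForcingSet_addSubdividedStar (hS : IsTotalForcingSet G S) :
    IsTotalForcingSet (addSubdividedStar G v)
      (Sum.inl '' S ∪ {Sum.inr 2, Sum.inr 3, Sum.inr 4}) := by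
  have hinr1 : Forces (addSubdividedStar G v) (Sum.inl '' S ∪ {Sum.inr 2, Sum.inr 3, Sum.inr 4})
      (Sum.inr 1) := by
    refine Forces.force (u := Sum.inr 2) (by simp [addSubdividedStar]) (Forces.mem (by simp)) ?_
    rintro (b | j) h hne
    · simp at h
    · obtain rfl | rfl : j = 1 ∨ j = 3 := by simp [addSubdividedStar] at h; omega
      · exact absurd rfl hne
      · exact Forces.mem (by simp)
  refine hS.of_embedding (addSubdividedStarEmbedding G v) ?_ ?_ ?_
  · rintro _ (rfl | rfl | rfl)
    · exact ⟨Sum.inr 3, by simp, by simp [addSubdividedStar]⟩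
    · exact ⟨Sum.inr 2, by simp, by simp [addSubdividedStar]⟩
    · exact ⟨Sum.inr 3, by simp, by simp [addSubdividedStar]⟩
  · rintro a (b | i) h hy
    · exact absurd ⟨b, rfl⟩ hy
    · simp only [addSubdividedStarEmbedding_apply, addSubdividedStar_adj_inl_inr] at h
      exact h.2 ▸ hinr1
  · rintro hold (b | i) hy
    · exact absurd ⟨b, rfl⟩ hy
    fin_cases i
    · refine Forces.force (u := Sum.inr 1) (by simp [addSubdividedStar]) hinr1 ?_
      rintro (b | j) h hne
      · simp only [addSubdividedStar_adj_inr_inl] at h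
        exact h.1 ▸ hold v
      · obtain rfl | rfl : j = 0 ∨ j = 2 := by simp [addSubdividedStar] at h; omega
        · exact absurd rfl hne
        · exact Forces.mem (by simp)
    · exact hinr1
    · exact Forces.mem (by simp)
    · exact Forces.mem (by simp)
    · exact Forces.mem (by simp)
    · refine Forces.force (u := Sum.inr 3) (by simp [addSubdividedStar])
        (Forces.mem (by simp)) ?_
      rintro (b | j) h hne
      · simp at h
      · obtain rfl | rfl | rfl : j = 2 ∨ j = 4 ∨ j = 5 := by
          simp [addSubdividedStar] at h; omega
        · exact Forces.mem (by simp)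
        · exact Forces.mem (by simp)
        · exact absurd rfl hne

lemma numLeaves_addSubdividedStar [Finite V] {x : V} (hx : G.Adj v x) (hv : ¬IsLeaf G v) :
    numLeaves (addSubdividedStar G v) = numLeaves G + 3 := by
  have hleaf : ∀ i j : Fin 6, (addSubdividedStar G v).Adj (Sum.inr i) (Sum.inr j) →
      (∀ k : Fin 6, (addSubdividedStar G v).Adj (Sum.inr i) (Sum.inr k) → k = j) →
      i ≠ 1 → IsLeaf (addSubdividedStar G v) (Sum.inr i) := by
    intro i j hij hj hi
    rw [isLeaf_iff_of_adj hij]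
    rintro (b | k) h
    · simp_all
    · rw [hj k h]
  refine (numLeaves_eq_ncard_add_ncard (addSubdividedStarEmbedding G v).toEmbedding
    (L := {a | IsLeaf G a}) (N := {Sum.inr 0, Sum.inr 4, Sum.inr 5})
    (isLeaf_embedding_iff_of_attached _ hx hv (y := Sum.inr 1) (by simp) (by simp) ?_) ?_
    (by simp)).trans ?_
  · rintro a ha (b | i) h
    · exact ⟨b, rfl⟩
    · exact absurd (addSubdividedStar_adj_inl_inr.mp h).1 ha
  · rintro (b | i) hy
    · exact absurd ⟨b, rfl⟩ hy
    fin_cases i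
    · simpa using hleaf 0 1 (by simp [addSubdividedStar])
        (by intro k; fin_cases k <;> simp [addSubdividedStar]) (by decide)
    · simpa using not_isLeaf_of_adj (y := Sum.inr 0) (z := Sum.inr 2)
        (by simp [addSubdividedStar]) (by simp [addSubdividedStar]) (by simp)
    · simpa using not_isLeaf_of_adj (y := Sum.inr 1) (z := Sum.inr 3)
        (by simp [addSubdividedStar]) (by simp [addSubdividedStar]) (by simp)
    · simpa using not_isLeaf_of_adj (y := Sum.inr 2) (z := Sum.inr 4)
        (by simp [addSubdividedStar]) (by simp [addSubdividedStar]) (by simp)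
    · simpa using hleaf 4 3 (by simp [addSubdividedStar])
        (by intro k; fin_cases k <;> simp [addSubdividedStar]) (by decide)
    · simpa using hleaf 5 3 (by simp [addSubdividedStar])
        (by intro k; fin_cases k <;> simp [addSubdividedStar]) (by decide)
  · rw [Set.ncard_insert_of_notMem (by simp), Set.ncard_pair (by simp), numLeaves]

end AddSubdividedStar

section Subdivide

variable {u v : V}

@[simp]
lemma subdivide1_adj_some_some {a b : V} :
    (subdivide1 G u v).Adj (some a) (some b) ↔
      G.Adj a b ∧ ¬(a = u ∧ b = v) ∧ ¬(a = v ∧ b = u) := by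
  simp [subdivide1]
  grind [SimpleGraph.adj_comm, SimpleGraph.Adj.ne]

@[simp]
lemma subdivide1_adj_none_some {b : V} : (subdivide1 G u v).Adj none (some b) ↔ b = u ∨ b = v := by
  simp [subdivide1]

@[simp]
lemma subdivide1_adj_some_none {a : V} : (subdivide1 G u v).Adj (some a) none ↔ a = u ∨ a = v := by
  simp [subdivide1]

lemma subdivide1_comm : subdivide1 G u v = subdivide1 G v u := by
  ext (_ | a) (_ | b) <;> simp <;> tauto

lemma Forces.subdivide1 (huv : G.Adj u v) {S' : Set (Option V)}
    (hS : ∀ s ∈ S, Forces (subdivide1 G u v) S' (some s))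
    (hu : Forces (subdivide1 G u v) S' (some u) → Forces (subdivide1 G u v) S' none) {a : V}
    (ha : Forces G S a) : Forces (subdivide1 G u v) S' (some a) := by
  induction ha with
  | mem h => exact hS _ h
  | @force a b hab _ _ iha ihw =>
    by_cases h₁ : a = u ∧ b = v
    · obtain ⟨rfl, rfl⟩ := h₁
      refine Forces.force (u := none) (by simp) (hu iha) ?_
      rintro (_ | c) h hne
      · simp at h
      · obtain rfl | rfl := subdivide1_adj_none_some.mp h
        exacts [iha, absurd rfl hne]
    by_cases h₂ : a = v ∧ b = u
    · obtain ⟨rfl, rfl⟩ := h₂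
      have hnone : Forces (subdivide1 G b a) S' none := by
        refine Forces.force (u := some a) (by simp) iha ?_
        rintro (_ | c) h hne
        · exact absurd rfl hne
        · replace h := subdivide1_adj_some_some.mp h
          exact ihw c h.1 fun hc => h.2.2 ⟨rfl, hc⟩
      refine Forces.force (u := none) (by simp) hnone ?_
      rintro (_ | c) h hne
      · simp at h
      · obtain rfl | rfl := subdivide1_adj_none_some.mp h
        exacts [absurd rfl hne, iha]
    refine Forces.force (u := some a) (by simp [hab, h₁, h₂]) iha ?_
    rintro (_ | c) h hne
    · rcases subdivide1_adj_some_none.mp h with rfl | rfl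
      · exact hu iha
      · exact hu (ihw u huv.symm fun hb => h₂ ⟨rfl, hb.symm⟩)
    · exact ihw c (subdivide1_adj_some_some.mp h).1 fun hc => hne (hc ▸ rfl)

lemma eq_of_ncard_neighborSet_le_two [Finite V] (hdeg : (G.neighborSet u).ncard ≤ 2)
    (huv : G.Adj u v) {p q : V} (hp : G.Adj u p) (hq : G.Adj u q) (hpv : p ≠ v) (hqv : q ≠ v) :
    p = q := by
  by_contra hpq
  have hsub : ({v, p, q} : Set V) ⊆ G.neighborSet u := by
    rintro _ (rfl | rfl | rfl) <;> assumption
  have := Set.ncard_le_ncard hsub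
  rw [Set.ncard_eq_three.mpr ⟨v, p, q, hpv.symm, hqv.symm, hpq, rfl⟩] at this
  omega

/-- The only neighbor of `u` besides the subdivision vertex is colored: it is the neighbor of `u`
in `S`, or the vertex that forced `u`. -/
lemma forces_none_subdivide1_of_forces_some [Finite V] (hdeg : (G.neighborSet u).ncard ≤ 2)
    (huv : G.Adj u v) (hS : u ∈ S → ∃ p ∈ S, G.Adj u p ∧ p ≠ v)
    (hu : Forces (subdivide1 G u v) (some '' S) (some u)) :
    Forces (subdivide1 G u v) (some '' S) none := by
  have hforce : ∀ p, G.Adj u p → p ≠ v → Forces (subdivide1 G u v) (some '' S) (some p) →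
      Forces (subdivide1 G u v) (some '' S) none := by
    intro p hp hpv hpF
    refine Forces.force (u := some u) (by simp) hu ?_
    rintro (_ | q) hq hne
    · exact absurd rfl hne
    · replace hq := subdivide1_adj_some_some.mp hq
      exact eq_of_ncard_neighborSet_le_two hdeg huv hp hq.1 hpv (fun h => hq.2.1 ⟨rfl, h⟩) ▸ hpF
  cases hu with
  | mem h =>
    obtain ⟨p, hpS, hp, hpv⟩ := hS (by simpa using h)
    exact hforce p hp hpv (Forces.mem ⟨p, hpS, rfl⟩)
  | @force y _ hy hyF _ =>
    rcases y with _ | p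
    · exact hyF
    · replace hy := subdivide1_adj_some_some.mp hy
      exact hforce p hy.1.symm (fun h => hy.2.2 ⟨h, rfl⟩) hyF

lemma isTotalForcingSet_subdivide1_of_forall_adj (hS : IsTotalForcingSet G S) (huv : G.Adj u v)
    (huS : u ∈ S) (honly : ∀ t ∈ S, G.Adj u t → t = v) :
    IsTotalForcingSet (subdivide1 G u v) (some '' (S \ {u}) ∪ {none}) := by
  have hvS : v ∈ S := by
    obtain ⟨t, htS, hut⟩ := hS.2 u huS
    exact honly t htS hut ▸ htS
  have hv' : some v ∈ some '' (S \ {u}) ∪ {none} := Or.inl ⟨v, ⟨hvS, huv.ne.symm⟩, rfl⟩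
  refine ⟨?_, ?_⟩
  · rintro (_ | a)
    · exact Forces.mem (Or.inr rfl)
    refine (hS.1 a).subdivide1 huv (fun s hs => ?_) fun _ => Forces.mem (Or.inr rfl)
    by_cases hsu : s = u
    · subst hsu
      refine Forces.force (u := none) (by simp) (Forces.mem (Or.inr rfl)) ?_
      rintro (_ | c) h hne
      · simp at h
      · obtain rfl | rfl := subdivide1_adj_none_some.mp h
        exacts [absurd rfl hne, Forces.mem hv']
    · exact Forces.mem (Or.inl ⟨s, ⟨hs, hsu⟩, rfl⟩)
  · rintro _ (⟨s, ⟨hs, hsu⟩, rfl⟩ | rfl)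
    · obtain ⟨t, htS, hst⟩ := hS.2 s hs
      by_cases htu : t = u
      · subst htu
        obtain rfl := honly s hs hst.symm
        exact ⟨none, Or.inr rfl, by simp⟩
      · exact ⟨some t, Or.inl ⟨t, ⟨htS, htu⟩, rfl⟩, by simp [hst, htu, show s ≠ u from hsu]⟩
    · exact ⟨some v, hv', by simp⟩

lemma isTotalForcingSet_subdivide1 [Finite V] (hS : IsTotalForcingSet G S) (huv : G.Adj u v)
    (hdeg : (G.neighborSet u).ncard ≤ 2) (hu : u ∈ S → ∃ p ∈ S, G.Adj u p ∧ p ≠ v)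
    (hv : v ∈ S → ∃ p ∈ S, G.Adj v p ∧ p ≠ u) :
    IsTotalForcingSet (subdivide1 G u v) (some '' S) := by
  have hsome : ∀ a, Forces (subdivide1 G u v) (some '' S) (some a) := fun a =>
    (hS.1 a).subdivide1 huv (S' := some '' S) (fun s hs => Forces.mem ⟨s, hs, rfl⟩)
      (forces_none_subdivide1_of_forces_some hdeg huv hu)
  refine ⟨?_, ?_⟩
  · rintro (_ | a)
    exacts [forces_none_subdivide1_of_forces_some hdeg huv hu (hsome u), hsome a]
  · rintro _ ⟨s, hs, rfl⟩
    obtain ⟨t, htS, hst⟩ := hS.2 s hs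
    by_cases h₁ : s = u ∧ t = v
    · obtain ⟨rfl, rfl⟩ := h₁
      obtain ⟨p, hpS, hsp, hpt⟩ := hu hs
      exact ⟨some p, ⟨p, hpS, rfl⟩, by simp [hsp, hpt, huv.ne]⟩
    by_cases h₂ : s = v ∧ t = u
    · obtain ⟨rfl, rfl⟩ := h₂
      obtain ⟨p, hpS, hsp, hpt⟩ := hv hs
      exact ⟨some p, ⟨p, hpS, rfl⟩, by simp [hsp, hpt, huv.ne.symm]⟩
    · exact ⟨some t, ⟨t, htS, rfl⟩, by simp [hst, h₁, h₂]⟩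

lemma exists_isTotalForcingSet_subdivide1 [Finite V] (hS : IsTotalForcingSet G S)
    (huv : G.Adj u v) (hdeg : (G.neighborSet u).ncard ≤ 2) :
    ∃ S' : Set (Option V), IsTotalForcingSet (subdivide1 G u v) S' ∧ S'.ncard = S.ncard := by
  have hcard : ∀ {w : V}, w ∈ S → (some '' (S \ {w}) ∪ {none}).ncard = S.ncard := fun hw => by
    rw [ncard_image_union (Option.some_injective V) _ (by simp), Set.ncard_singleton,
      Set.ncard_sdiff_singleton_add_one hw]
  by_cases hu : u ∈ S ∧ ∀ t ∈ S, G.Adj u t → t = v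
  · exact ⟨_, isTotalForcingSet_subdivide1_of_forall_adj hS huv hu.1 hu.2, hcard hu.1⟩
  by_cases hv : v ∈ S ∧ ∀ t ∈ S, G.Adj v t → t = u
  · rw [subdivide1_comm]
    exact ⟨_, isTotalForcingSet_subdivide1_of_forall_adj hS huv.symm hv.1 hv.2, hcard hv.1⟩
  push Not at hu hv
  exact ⟨_, isTotalForcingSet_subdivide1 hS huv hdeg hu hv,
    Set.ncard_image_of_injective S (Option.some_injective V)⟩

lemma isLeaf_subdivide1_some_left (huv : G.Adj u v) :
    IsLeaf (subdivide1 G u v) (some u) ↔ IsLeaf G u := by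
  rw [isLeaf_iff_of_adj (subdivide1_adj_some_none.mpr (Or.inl rfl)), isLeaf_iff_of_adj huv]
  refine ⟨fun h c hc => ?_, fun h => ?_⟩
  · by_contra hcv
    exact Option.some_ne_none c (h (some c) (by simp [hc, hcv, huv.ne]))
  · rintro (_ | c) hc
    · rfl
    · replace hc := subdivide1_adj_some_some.mp hc
      exact absurd ⟨rfl, h c hc.1⟩ hc.2.1

lemma numLeaves_subdivide1 [Finite V] (huv : G.Adj u v) :
    numLeaves (subdivide1 G u v) = numLeaves G := by
  have hold : ∀ a, IsLeaf (subdivide1 G u v) (some a) ↔ a ∈ {a | IsLeaf G a} := by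
    intro a
    by_cases hau : a = u
    · subst hau
      exact isLeaf_subdivide1_some_left huv
    by_cases hav : a = v
    · subst hav
      rw [subdivide1_comm]
      exact isLeaf_subdivide1_some_left huv.symm
    refine isLeaf_iff_of_neighborSet_eq_image (Option.some_injective V) ?_
    ext (_ | c) <;> simp [hau, hav]
  have hnone : ¬IsLeaf (subdivide1 G u v) none :=
    not_isLeaf_of_adj (subdivide1_adj_none_some.mpr (Or.inl rfl))
      (subdivide1_adj_none_some.mpr (Or.inr rfl)) (by simp [huv.ne])
  rw [numLeaves_eq_ncard_add_ncard Function.Embedding.some hold (N := ∅) ?_ (by simp),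
    Set.ncard_empty, add_zero, numLeaves]
  rintro (_ | b) hb
  · simpa using hnone
  · exact absurd ⟨b, rfl⟩ hb

end Subdivide

lemma InFamilyF.finite {V : Type} {G : SimpleGraph V} (h : InFamilyF G) : Finite V := by
  induction h with
  | base => infer_instance
  | iso _ e ih => exact Finite.of_equiv _ e.toEquiv
  | op1 | op2 | op3 | op4 | op5 => infer_instance

lemma InFamilyF.exists_isTotalForcingSet {V : Type} {G : SimpleGraph V} (h : InFamilyF G) :
    ∃ S : Set V, IsTotalForcingSet G S ∧ S.ncard = numLeaves G := by
  induction h with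
  | base => exact ⟨_, isTotalForcingSet_pathGraph_two, by simp [numLeaves_pathGraph_two]⟩
  | @iso V W G H hG e ih =>
    have := hG.finite
    have : Finite W := Finite.of_equiv _ e.toEquiv
    obtain ⟨S, hS, hcard⟩ := ih
    exact ⟨_, hS.image_iso e, by rw [Set.ncard_image_of_injective S e.injective, hcard,
      numLeaves_iso e]⟩
  | @op1 V G u v hG huv hdeg ih =>
    have := hG.finite
    obtain ⟨S, hS, hcard⟩ := ih
    rw [numLeaves_subdivide1 huv, ← hcard]
    rcases hdeg with hdeg | hdeg
    · exact exists_isTotalForcingSet_subdivide1 hS huv hdeg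
    · rw [subdivide1_comm]
      exact exists_isTotalForcingSet_subdivide1 hS huv.symm hdeg
  | @op2 V G v hG hv ih =>
    have := hG.finite
    obtain ⟨S, hS, hcard⟩ := ih
    refine ⟨_, isTotalForcingSet_addLeaf hS hv, ?_⟩
    obtain ⟨x, y, hxy, hvx, hvy, -, -⟩ := hv
    rw [ncard_image_union (Option.some_injective V) S (by simp), Set.ncard_singleton, hcard,
      numLeaves_addLeaf hvx (not_isLeaf_of_adj hvx hvy hxy)]
  | @op3 V G w v hG hw hwv hv ih =>
    have := hG.finite
    obtain ⟨S, hS, hcard⟩ := ih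
    obtain ⟨S₂, hS₂, hcard₂, hvS₂⟩ := hS.exists_mem_isLeaf hw hv hwv
    have hnbr : ∀ b, G.Adj v b → b ∈ S₂ := fun b hb =>
      hv.eq_of_adj_s8 hwv.symm hb ▸ hS₂.mem_of_isStrongSupport_s8 hw
    refine ⟨_, isTotalForcingSet_addTwoLeaves hS₂ hvS₂ hnbr, ?_⟩
    rw [ncard_image_union Sum.inl_injective S₂ (by simp), Set.ncard_singleton, hcard₂, hcard,
      numLeaves_addTwoLeaves hv]
  | @op4 V G v hG hv ih =>
    have := hG.finite
    obtain ⟨S, hS, hcard⟩ := ih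
    obtain ⟨x, hx⟩ := exists_adj_of_two_le_ncard hv
    refine ⟨_, isTotalForcingSet_addP3 hS, ?_⟩
    rw [ncard_image_union Sum.inl_injective S (by simp), Set.ncard_pair (by simp), hcard,
      numLeaves_addP3 hx (not_isLeaf_of_two_le_ncard hv)]
  | @op5 V G v hG hv ih =>
    have := hG.finite
    obtain ⟨S, hS, hcard⟩ := ih
    obtain ⟨x, hx⟩ := exists_adj_of_two_le_ncard hv
    refine ⟨_, isTotalForcingSet_addSubdividedStar hS, ?_⟩
    rw [ncard_image_union Sum.inl_injective S (by simp), Set.ncard_insert_of_notMem (by simp),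
      Set.ncard_pair (by simp), hcard,
      numLeaves_addSubdividedStar hx (not_isLeaf_of_two_le_ncard hv)]

lemma totalForcingNumber_eq_numLeaves [Fintype V] (hS : IsTotalForcingSet G S)
    (hcard : S.ncard = numLeaves G) : totalForcingNumber G = numLeaves G := by
  classical
  have hmem : numLeaves G ∈ {n | ∃ S : Finset V, S.card = n ∧ IsTotalForcingSet G ↑S} :=
    ⟨S.toFinset, by rw [← hcard, Set.ncard_eq_toFinset_card'], by rwa [Set.coe_toFinset]⟩
  refine le_antisymm (Nat.sInf_le hmem) ?_
  obtain ⟨S₀, hS₀card, hS₀⟩ := Nat.sInf_mem ⟨_, hmem⟩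
  have := hS₀.numLeaves_le
  rwa [Set.ncard_coe_finset, hS₀card] at this

theorem stmt8_general {V : Type} [Fintype V] (T : SimpleGraph V)
    (hmem : InFamilyF T) :
    totalForcingNumber T = numLeaves T := by
  obtain ⟨S, hS, hcard⟩ := hmem.exists_isTotalForcingSet
  exact totalForcingNumber_eq_numLeaves hS hcard

/-- If `T` is a tree in the family `ℱ` with `n₁` leaves, then
`F_t(T) = n₁`. -/
theorem stmt8 {V : Type} [Fintype V] (T : SimpleGraph V)
    (hT : T.IsTree) (hmem : InFamilyF T) :
    totalForcingNumber T = numLeaves T :=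
  stmt8_general T hmem

end TotalForcing
end

section
/- For every integer k ≥ 1, there exists a tree T such that F_t(T) = F(T) + k. -/
namespace TotalForcing

open SimpleGraph

/-- A graph defined by a parent function with a decreasing measure is a tree. -/
lemma isTree_of_parent {V : Type*} [Fintype V] (G : SimpleGraph V) (r : V) (p : V → V)
    (f : V → ℕ) (hdec : ∀ v, v ≠ r → f (p v) < f v)
    (hadj : ∀ x y, G.Adj x y ↔ (x ≠ r ∧ p x = y) ∨ (y ≠ r ∧ p y = x)) :
    G.IsTree := by
  have hreach : ∀ (n : ℕ) (v : V), f v ≤ n → G.Reachable v r := by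
    intro n
    induction n with
    | zero =>
      intro v hv
      by_cases h : v = r
      · exact h ▸ (Reachable.refl r : G.Reachable r r)
      · exact absurd (lt_of_lt_of_le (hdec v h) hv) (Nat.not_lt_zero _)
    | succ n ih =>
      intro v hv
      by_cases h : v = r
      · exact h ▸ (Reachable.refl r : G.Reachable r r)
      · have hAdj : G.Adj v (p v) := (hadj v (p v)).2 (Or.inl ⟨h, rfl⟩)
        exact hAdj.reachable.trans (ih (p v) (by have := hdec v h; omega))
  classical
  constructor
  · haveI : Nonempty V := ⟨r⟩
    exact ⟨fun u v => ((hreach (f u) u le_rfl)).trans (hreach (f v) v le_rfl).symm⟩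
  · intro v c hc
    obtain ⟨u, hu_mem, hu_max⟩ :=
      Finset.exists_max_image c.support.toFinset f
        ⟨v, List.mem_toFinset.2 c.start_mem_support⟩
    rw [List.mem_toFinset] at hu_mem
    have hu_max' : ∀ z ∈ c.support, f z ≤ f u := fun z hz =>
      hu_max z (List.mem_toFinset.2 hz)
    have hc' : (c.rotate u hu_mem).IsCycle := hc.rotate hu_mem
    have hsup : ∀ z ∈ (c.rotate u hu_mem).support, f z ≤ f u := by
      intro z hz
      rw [Walk.support_eq_cons] at hz
      rcases List.mem_cons.1 hz with rfl | hz
      · exact le_rfl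
      · exact hu_max' z (List.mem_of_mem_tail
          ((List.IsRotated.mem_iff (Walk.support_rotate c u hu_mem)).1 hz))
    obtain ⟨x, hux, q, hEq⟩ : ∃ (x : V) (h : G.Adj u x) (q : G.Walk x u),
        c.rotate u hu_mem = Walk.cons h q := by
      cases hw : c.rotate u hu_mem with
      | nil => exact absurd (hw ▸ hc') Walk.IsCycle.not_of_nil
      | cons h q => exact ⟨_, h, q, rfl⟩
    rw [hEq] at hc' hsup
    rw [Walk.cons_isCycle_iff] at hc'
    obtain ⟨hq_path, hq_edge⟩ := hc'
    have hur : u ≠ r ∧ p u = x := by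
      rcases (hadj u x).1 hux with ⟨h1, h2⟩ | ⟨h1, h2⟩
      · exact ⟨h1, h2⟩
      · exfalso
        have hx_mem : x ∈ (Walk.cons hux q).support := by
          rw [Walk.support_cons]; exact List.mem_cons_of_mem _ q.start_mem_support
        have h3 := hsup x hx_mem
        have h4 := hdec x h1
        rw [h2] at h4
        omega
    obtain ⟨y, huy, q2, hEq2⟩ : ∃ (y : V) (h : G.Adj u y) (q2 : G.Walk y x),
        q.reverse = Walk.cons h q2 := by
      cases hw : q.reverse with
      | nil => exact absurd rfl hux.ne
      | cons h q2 => exact ⟨_, h, q2, rfl⟩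
    have hy : y = p u := by
      rcases (hadj u y).1 huy with ⟨h1, h2⟩ | ⟨h1, h2⟩
      · exact h2.symm
      · exfalso
        have hy_mem : y ∈ (Walk.cons hux q).support := by
          rw [Walk.support_cons]
          refine List.mem_cons_of_mem _ ?_
          have : y ∈ q.reverse.support := by
            rw [hEq2, Walk.support_cons]
            exact List.mem_cons_of_mem _ q2.start_mem_support
          rwa [Walk.support_reverse, List.mem_reverse] at this
        have h3 := hsup y hy_mem
        have h4 := hdec y h1
        rw [h2] at h4
        omega
    have hxy : x = y := by rw [hy, hur.2]
    subst hxy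
    apply hq_edge
    have : s(u, x) ∈ q.reverse.edges := by rw [hEq2, Walk.edges_cons]; exact List.mem_cons_self ..
    rwa [Walk.edges_reverse, List.mem_reverse] at this

namespace Caterpillar

/-- parent on codes: centers `3i`, leaves `3i+1`, `3i+2`. -/
def P (x : ℕ) : ℕ := if x % 3 = 0 then x - 3 else x - x % 3

lemma P_le (x : ℕ) : P x ≤ x := by unfold P; split <;> omega
lemma P_lt (x : ℕ) (hx : x ≠ 0) : P x < x := by unfold P; split <;> omega
lemma P_mod (x : ℕ) : P x % 3 = 0 := by unfold P; split <;> omega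
lemma P_A (i : ℕ) : P (3 * i + 1) = 3 * i := by unfold P; split <;> omega
lemma P_B (i : ℕ) : P (3 * i + 2) = 3 * i := by unfold P; split <;> omega
lemma P_C (i : ℕ) : P (3 * i + 3) = 3 * i := by unfold P; split <;> omega
lemma P_C0 (i : ℕ) (h : i ≠ 0) : P (3 * i) = 3 * i - 3 := by unfold P; split <;> omega

/-- The caterpillar tree with `m+1` centers, each with two pendant leaves. -/
def Tr (m : ℕ) : SimpleGraph (Fin (3 * m + 3)) where
  Adj x y := (x.val ≠ 0 ∧ P x.val = y.val) ∨ (y.val ≠ 0 ∧ P y.val = x.val)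
  symm := ⟨fun x y h => Or.symm h⟩
  loopless := ⟨fun x h => by
    rcases h with ⟨h1, h2⟩ | ⟨h1, h2⟩ <;> exact absurd h2 (Nat.ne_of_lt (P_lt _ h1))⟩

variable {m : ℕ}

def Cv (m : ℕ) (i : Fin (m + 1)) : Fin (3 * m + 3) := ⟨3 * i.val, by have := i.isLt; omega⟩
def Av (m : ℕ) (i : Fin (m + 1)) : Fin (3 * m + 3) := ⟨3 * i.val + 1, by have := i.isLt; omega⟩
def Bv (m : ℕ) (i : Fin (m + 1)) : Fin (3 * m + 3) := ⟨3 * i.val + 2, by have := i.isLt; omega⟩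

lemma adj_AC (i : Fin (m + 1)) : (Tr m).Adj (Av m i) (Cv m i) :=
  Or.inl ⟨Nat.succ_ne_zero _, P_A i.val⟩

lemma adj_BC (i : Fin (m + 1)) : (Tr m).Adj (Bv m i) (Cv m i) :=
  Or.inl ⟨Nat.succ_ne_zero _, P_B i.val⟩

lemma nbrA (i : Fin (m + 1)) (w : Fin (3 * m + 3)) (h : (Tr m).Adj (Av m i) w) :
    w = Cv m i := by
  rcases h with ⟨h1, h2⟩ | ⟨h1, h2⟩
  · have h2' : P (3 * i.val + 1) = w.val := h2
    rw [P_A] at h2'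
    exact Fin.ext h2'.symm
  · have hm := P_mod w.val
    have h2' : P w.val = 3 * i.val + 1 := h2
    omega

lemma nbrB (i : Fin (m + 1)) (w : Fin (3 * m + 3)) (h : (Tr m).Adj (Bv m i) w) :
    w = Cv m i := by
  rcases h with ⟨h1, h2⟩ | ⟨h1, h2⟩
  · have h2' : P (3 * i.val + 2) = w.val := h2
    rw [P_B] at h2'
    exact Fin.ext h2'.symm
  · have hm := P_mod w.val
    have h2' : P w.val = 3 * i.val + 2 := h2
    omega

lemma nbrC (i : Fin (m + 1)) (w : Fin (3 * m + 3)) (h : (Tr m).Adj (Cv m i) w) :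
    w = Av m i ∨ w = Bv m i ∨ ∃ j, w = Cv m j := by
  rcases h with ⟨h1, h2⟩ | ⟨h1, h2⟩
  · have h1' : (3 : ℕ) * i.val ≠ 0 := h1
    have h2' : P (3 * i.val) = w.val := h2
    rw [P_C0 i.val (by omega)] at h2'
    refine Or.inr (Or.inr ⟨⟨i.val - 1, by have := i.isLt; omega⟩, Fin.ext ?_⟩)
    show w.val = 3 * (i.val - 1)
    omega
  · have h2' : P w.val = 3 * i.val := h2
    have hw := w.isLt
    have h1' : w.val ≠ 0 := h1
    unfold P at h2'
    split at h2'
    · refine Or.inr (Or.inr ⟨⟨i.val + 1, by omega⟩, Fin.ext ?_⟩)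
      show w.val = 3 * (i.val + 1)
      omega
    · rename_i hmod
      have hcase : w.val = 3 * i.val + 1 ∨ w.val = 3 * i.val + 2 := by omega
      rcases hcase with h | h
      · exact Or.inl (Fin.ext h)
      · exact Or.inr (Or.inl (Fin.ext h))

lemma vert_cases (v : Fin (3 * m + 3)) :
    (∃ i, v = Cv m i) ∨ (∃ i, v = Av m i) ∨ (∃ i, v = Bv m i) := by
  have hv := v.isLt
  have h : v.val % 3 = 0 ∨ v.val % 3 = 1 ∨ v.val % 3 = 2 := by omega
  rcases h with h | h | h
  · exact Or.inl ⟨⟨v.val / 3, by omega⟩, Fin.ext (by show v.val = 3 * (v.val / 3); omega)⟩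
  · exact Or.inr (Or.inl ⟨⟨v.val / 3, by omega⟩,
      Fin.ext (by show v.val = 3 * (v.val / 3) + 1; omega)⟩)
  · exact Or.inr (Or.inr ⟨⟨v.val / 3, by omega⟩,
      Fin.ext (by show v.val = 3 * (v.val / 3) + 2; omega)⟩)

/-! ### Forcing facts -/

lemma forces_all {S : Set (Fin (3 * m + 3))} (hS : ∀ i, Av m i ∈ S) :
    IsForcingSet (Tr m) S := by
  have fa : ∀ i, Forces (Tr m) S (Av m i) := fun i => Forces.mem (hS i)
  have fc : ∀ i, Forces (Tr m) S (Cv m i) := fun i =>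
    Forces.force (adj_AC i) (fa i) (fun w hw hne => absurd (nbrA i w hw) hne)
  have fb : ∀ i, Forces (Tr m) S (Bv m i) := by
    intro i
    refine Forces.force ((adj_BC i).symm) (fc i) (fun w hw hne => ?_)
    rcases nbrC i w hw with rfl | rfl | ⟨j, rfl⟩
    · exact fa i
    · exact absurd rfl hne
    · exact fc j
  intro v
  rcases vert_cases v with ⟨i, rfl⟩ | ⟨i, rfl⟩ | ⟨i, rfl⟩
  exacts [fc i, fa i, fb i]

/-- The generic "two leaves with a common support" lemma. -/
lemma pair_mem {W : Type*} {G : SimpleGraph W} {S : Set W} {u x y : W}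
    (hxy : x ≠ y) (hxu : G.Adj x u) (hyu : G.Adj y u)
    (hx : ∀ w, G.Adj x w → w = u) (hy : ∀ w, G.Adj y w → w = u)
    (hfx : Forces G S x) : x ∈ S ∨ y ∈ S := by
  suffices H : ∀ z, Forces G S z → (z = x ∨ z = y) → (x ∈ S ∨ y ∈ S) from
    H x hfx (Or.inl rfl)
  intro z hz
  induction hz with
  | mem hv =>
    rintro (rfl | rfl)
    · exact Or.inl hv
    · exact Or.inr hv
  | force hadj hfu hall ih ihall =>
    rintro (rfl | rfl)
    · have hu' := hx _ hadj.symm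
      subst hu'
      exact ihall y hyu.symm (Ne.symm hxy) (Or.inr rfl)
    · have hu' := hy _ hadj.symm
      subst hu'
      exact ihall x hxu.symm hxy (Or.inl rfl)

lemma AB_ne (i : Fin (m + 1)) : Av m i ≠ Bv m i := by
  intro h
  have h' : 3 * i.val + 1 = 3 * i.val + 2 := congrArg Fin.val h
  omega

lemma key_pair {S : Finset (Fin (3 * m + 3))} (hS : IsForcingSet (Tr m) ↑S)
    (i : Fin (m + 1)) : Av m i ∈ S ∨ Bv m i ∈ S := by
  have := pair_mem (AB_ne i) (adj_AC i) (adj_BC i) (nbrA i) (nbrB i) (hS (Av m i))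
  simpa using this

lemma F_lower (S : Finset (Fin (3 * m + 3))) (hS : IsForcingSet (Tr m) ↑S) :
    m + 1 ≤ S.card := by
  classical
  set l : Fin (m + 1) → Fin (3 * m + 3) :=
    fun i => if Av m i ∈ S then Av m i else Bv m i with hl
  have hls : ∀ i, l i ∈ S := by
    intro i
    by_cases h : Av m i ∈ S
    · simp [hl, h]
    · simp only [hl, if_neg h]
      exact (key_pair hS i).resolve_left h
  have hval : ∀ i, (l i).val = 3 * i.val + 1 ∨ (l i).val = 3 * i.val + 2 := by
    intro i
    by_cases h : Av m i ∈ S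
    · simp only [hl, if_pos h]; exact Or.inl rfl
    · simp only [hl, if_neg h]; exact Or.inr rfl
  calc m + 1 = (Finset.univ : Finset (Fin (m + 1))).card := by simp
    _ ≤ S.card := Finset.card_le_card_of_injOn l (fun i _ => hls i) (by
        intro i _ j _ hij
        have h1 := hval i
        have h2 := hval j
        have h3 : (l i).val = (l j).val := congrArg Fin.val hij
        exact Fin.ext (by omega))

lemma Ft_lower (S : Finset (Fin (3 * m + 3))) (hS : IsTotalForcingSet (Tr m) ↑S) :
    2 * m + 2 ≤ S.card := by
  classical
  set l : Fin (m + 1) → Fin (3 * m + 3) :=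
    fun i => if Av m i ∈ S then Av m i else Bv m i with hl
  have hls : ∀ i, l i ∈ S := by
    intro i
    by_cases h : Av m i ∈ S
    · simp [hl, h]
    · simp only [hl, if_neg h]
      exact (key_pair hS.1 i).resolve_left h
  have hval : ∀ i, (l i).val = 3 * i.val + 1 ∨ (l i).val = 3 * i.val + 2 := by
    intro i
    by_cases h : Av m i ∈ S
    · simp only [hl, if_pos h]; exact Or.inl rfl
    · simp only [hl, if_neg h]; exact Or.inr rfl
  have hCs : ∀ i, Cv m i ∈ S := by
    intro i
    obtain ⟨u, hu, hadj⟩ := hS.2 (l i) (Finset.mem_coe.2 (hls i))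
    have hu' : u = Cv m i := by
      by_cases h : Av m i ∈ S
      · have he : l i = Av m i := by simp only [hl, if_pos h]
        exact nbrA i u (he ▸ hadj)
      · have he : l i = Bv m i := by simp only [hl, if_neg h]
        exact nbrB i u (he ▸ hadj)
    exact hu' ▸ (Finset.mem_coe.1 hu)
  have hcard : (Finset.univ : Finset (Fin (m + 1) × Bool)).card = 2 * m + 2 := by
    simp [Finset.card_univ]
    omega
  calc 2 * m + 2 = (Finset.univ : Finset (Fin (m + 1) × Bool)).card := hcard.symm
    _ ≤ S.card := by
        refine Finset.card_le_card_of_injOn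
          (fun z => if z.2 then Cv m z.1 else l z.1) (fun z _ => ?_) ?_
        · rcases z with ⟨i, b⟩
          cases b
          · exact hls i
          · exact hCs i
        · rintro ⟨i, b⟩ _ ⟨j, b'⟩ _ hij
          have h1 := hval i
          have h2 := hval j
          cases b <;> cases b'
          · have h3 : (l i).val = (l j).val := congrArg Fin.val hij
            simp only [Prod.mk.injEq]
            exact ⟨Fin.ext (by omega), trivial⟩
          · exfalso
            have h3 : (l i).val = 3 * j.val := congrArg Fin.val hij
            omega
          · exfalso
            have h3 : (3 : ℕ) * i.val = (l j).val := congrArg Fin.val hij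
            omega
          · have h3 : (3 : ℕ) * i.val = 3 * j.val := congrArg Fin.val hij
            simp only [Prod.mk.injEq]
            exact ⟨Fin.ext (by omega), trivial⟩

lemma mem_SA (i : Fin (m + 1)) : Av m i ∈ (Finset.image (Av m) Finset.univ : Finset _) :=
  Finset.mem_image_of_mem _ (Finset.mem_univ i)

lemma Av_inj : Function.Injective (Av m) := by
  intro i j h
  have h' : 3 * i.val + 1 = 3 * j.val + 1 := congrArg Fin.val h
  exact Fin.ext (by omega)

lemma Cv_inj : Function.Injective (Cv m) := by
  intro i j h
  have h' : 3 * i.val = 3 * j.val := congrArg Fin.val h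
  exact Fin.ext (by omega)

lemma forcingNumber_Tr : forcingNumber (Tr m) = m + 1 := by
  have hforce : IsForcingSet (Tr m) ↑(Finset.image (Av m) Finset.univ) :=
    forces_all (fun i => Finset.mem_coe.2 (mem_SA i))
  have hcard : (Finset.image (Av m) Finset.univ).card = m + 1 := by
    rw [Finset.card_image_of_injective _ Av_inj, Finset.card_univ, Fintype.card_fin]
  apply le_antisymm
  · exact Nat.sInf_le ⟨_, hcard, hforce⟩
  · refine le_csInf ⟨m + 1, ?_⟩ ?_
    · exact ⟨_, hcard, hforce⟩
    rintro n ⟨S, rfl, hS⟩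
    exact F_lower S hS

lemma totalForcingNumber_Tr : totalForcingNumber (Tr m) = 2 * m + 2 := by
  classical
  set S : Finset (Fin (3 * m + 3)) :=
    Finset.image (Av m) Finset.univ ∪ Finset.image (Cv m) Finset.univ with hSdef
  have hmemA : ∀ i, Av m i ∈ S := fun i =>
    Finset.mem_union_left _ (Finset.mem_image_of_mem _ (Finset.mem_univ i))
  have hmemC : ∀ i, Cv m i ∈ S := fun i =>
    Finset.mem_union_right _ (Finset.mem_image_of_mem _ (Finset.mem_univ i))
  have htotal : IsTotalForcingSet (Tr m) ↑S := by
    constructor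
    · exact forces_all (fun i => Finset.mem_coe.2 (hmemA i))
    · intro v hv
      rcases Finset.mem_union.1 (Finset.mem_coe.1 hv) with h | h
      · obtain ⟨i, _, rfl⟩ := Finset.mem_image.1 h
        exact ⟨Cv m i, Finset.mem_coe.2 (hmemC i), adj_AC i⟩
      · obtain ⟨i, _, rfl⟩ := Finset.mem_image.1 h
        exact ⟨Av m i, Finset.mem_coe.2 (hmemA i), (adj_AC i).symm⟩
  have hdisj : Disjoint (Finset.image (Av m) Finset.univ)
      (Finset.image (Cv m) Finset.univ) := by
    rw [Finset.disjoint_left]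
    intro a ha hb
    obtain ⟨i, _, rfl⟩ := Finset.mem_image.1 ha
    obtain ⟨j, _, hj⟩ := Finset.mem_image.1 hb
    have : 3 * j.val = 3 * i.val + 1 := congrArg Fin.val hj
    omega
  have hcard : S.card = 2 * m + 2 := by
    rw [hSdef, Finset.card_union_of_disjoint hdisj,
      Finset.card_image_of_injective _ Av_inj, Finset.card_image_of_injective _ Cv_inj,
      Finset.card_univ, Fintype.card_fin]
    omega
  apply le_antisymm
  · exact Nat.sInf_le ⟨S, hcard, htotal⟩
  · refine le_csInf ⟨2 * m + 2, ?_⟩ ?_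
    · exact ⟨S, hcard, htotal⟩
    rintro n ⟨S', rfl, hS'⟩
    exact Ft_lower S' hS'

lemma isTree_Tr : (Tr m).IsTree := by
  apply isTree_of_parent (Tr m) ⟨0, by omega⟩
    (fun x => ⟨P x.val, lt_of_le_of_lt (P_le _) x.isLt⟩) (fun x => x.val)
  · intro v hv
    exact P_lt v.val (fun h0 => hv (Fin.ext h0))
  · intro x y
    constructor
    · rintro (⟨h1, h2⟩ | ⟨h1, h2⟩)
      · exact Or.inl ⟨fun h => h1 (congrArg Fin.val h), Fin.ext h2⟩
      · exact Or.inr ⟨fun h => h1 (congrArg Fin.val h), Fin.ext h2⟩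
    · rintro (⟨h1, h2⟩ | ⟨h1, h2⟩)
      · exact Or.inl ⟨fun h => h1 (Fin.ext h), congrArg Fin.val h2⟩
      · exact Or.inr ⟨fun h => h1 (Fin.ext h), congrArg Fin.val h2⟩

end Caterpillar

/-- For every integer `k ≥ 1` there exists a tree `T` with
`F_t(T) = F(T) + k`. -/
theorem stmt11 (k : ℕ) (hk : 1 ≤ k) :
    ∃ (n : ℕ) (T : SimpleGraph (Fin n)), T.IsTree ∧
      totalForcingNumber T = forcingNumber T + k := by
  obtain ⟨m, rfl⟩ : ∃ m, k = m + 1 := ⟨k - 1, by omega⟩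
  refine ⟨3 * m + 3, Caterpillar.Tr m, Caterpillar.isTree_Tr, ?_⟩
  rw [Caterpillar.forcingNumber_Tr, Caterpillar.totalForcingNumber_Tr]
  omega

end TotalForcing
end

section
/- Let k ≥ 1 be an integer and let T be the tree of order 3k obtained from a path on k vertices by attaching two new pendant leaves to each vertex of the path. Then F_t(T) = 2k and F(T) = k. -/
namespace TotalForcing

/-- The tree obtained from a path on `k` vertices (`Sum.inl 0 – ⋯ – Sum.inl (k-1)`)
by attaching two new pendant leaves `Sum.inr (i, 0)` and `Sum.inr (i, 1)` to each
path vertex `Sum.inl i`. It has order `3k`. -/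
def caterpillar (k : ℕ) : SimpleGraph (Fin k ⊕ Fin k × Fin 2) :=
  SimpleGraph.fromRel (fun x y =>
    (∃ i j : Fin k, x = Sum.inl i ∧ y = Sum.inl j ∧ (i : ℕ) + 1 = (j : ℕ)) ∨
    (∃ (i : Fin k) (t : Fin 2), x = Sum.inl i ∧ y = Sum.inr (i, t)))

open SimpleGraph

section Aux

variable {k : ℕ}

/-! ### Adjacency lemmas -/

lemma adj_inl_inl {i j : Fin k} :
    (caterpillar k).Adj (Sum.inl i) (Sum.inl j) ↔ (i:ℕ)+1 = j ∨ (j:ℕ)+1 = i := by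
  simp only [caterpillar, fromRel_adj, ne_eq, Sum.inl.injEq]
  constructor
  · rintro ⟨hne, (⟨a, b, rfl, hb, hab⟩ | ⟨a, b, rfl, hb⟩) |
      (⟨a, b, ha, hb, hab⟩ | ⟨a, b, ha, hb⟩)⟩ <;> simp_all
  · rintro (h | h)
    · exact ⟨fun he => by omega, Or.inl (Or.inl ⟨i, j, rfl, rfl, h⟩)⟩
    · exact ⟨fun he => by omega, Or.inr (Or.inl ⟨j, i, rfl, rfl, h⟩)⟩

lemma adj_inl_inr {i : Fin k} {p : Fin k × Fin 2} :
    (caterpillar k).Adj (Sum.inl i) (Sum.inr p) ↔ p.1 = i := by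
  simp only [caterpillar, fromRel_adj, ne_eq]
  constructor
  · rintro ⟨hne, h | h⟩ <;> rcases h with (⟨a, b, h⟩ | ⟨a, b, h⟩) <;> simp_all
  · rintro rfl
    exact ⟨by simp, Or.inl (Or.inr ⟨p.1, p.2, rfl, rfl⟩)⟩

lemma adj_inr_inr {p q : Fin k × Fin 2} :
    ¬ (caterpillar k).Adj (Sum.inr p) (Sum.inr q) := by
  simp only [caterpillar, fromRel_adj, ne_eq]
  rintro ⟨hne, h | h⟩ <;> rcases h with (⟨a, b, h⟩ | ⟨a, b, h⟩) <;> simp_all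

lemma adj_inr {p : Fin k × Fin 2} {y : Fin k ⊕ Fin k × Fin 2} :
    (caterpillar k).Adj (Sum.inr p) y ↔ y = Sum.inl p.1 := by
  cases y with
  | inl i => rw [(caterpillar k).adj_comm, adj_inl_inr]
             constructor <;> (rintro h; simp_all)
  | inr q => simp [adj_inr_inr]

/-! ### Walk invariants -/

lemma walk_invariant {H : SimpleGraph V} {P : V → Prop}
    (hP : ∀ x y, H.Adj x y → P x → P y) {u v : V} (w : H.Walk u v) : P u → P v := by
  induction w with
  | nil => exact id
  | cons ha p ih => exact fun hu => ih (hP _ _ ha hu)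

lemma not_reachable_of_invariant {H : SimpleGraph V} (P : V → Prop)
    (hP : ∀ x y, H.Adj x y → P x → P y) {u v : V} (hu : P u) (hv : ¬ P v) :
    ¬ H.Reachable u v := fun h => hv (h.elim fun w => walk_invariant hP w hu)

/-! ### Connectivity -/

lemma reach_inl (hk : 0 < k) (i : Fin k) :
    (caterpillar k).Reachable (Sum.inl i) (Sum.inl ⟨0, hk⟩) := by
  obtain ⟨n, hn⟩ := i
  induction n with
  | zero => exact Reachable.refl _
  | succ m ih =>
      have hm : m < k := Nat.lt_of_succ_lt hn
      have hadj : (caterpillar k).Adj (Sum.inl ⟨m, hm⟩) (Sum.inl ⟨m+1, hn⟩) :=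
        adj_inl_inl.2 (Or.inl rfl)
      exact hadj.symm.reachable.trans (ih hm)

lemma connected (hk : 0 < k) : (caterpillar k).Connected := by
  have aux : ∀ x, (caterpillar k).Reachable x (Sum.inl ⟨0, hk⟩) := by
    intro x
    cases x with
    | inl i => exact reach_inl hk i
    | inr p =>
        have h : (caterpillar k).Adj (Sum.inr p) (Sum.inl p.1) := adj_inr.2 rfl
        exact h.reachable.trans (reach_inl hk p.1)
  have : Nonempty (Fin k ⊕ Fin k × Fin 2) := ⟨Sum.inl ⟨0, hk⟩⟩
  exact Connected.mk fun x y => (aux x).trans (aux y).symm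

/-! ### Acyclicity via bridges -/

private def pos : (Fin k ⊕ Fin k × Fin 2) → ℕ := Sum.elim (·.val) (fun p => p.1.val)

lemma del_adj {e : Sym2 (Fin k ⊕ Fin k × Fin 2)} {x y : Fin k ⊕ Fin k × Fin 2} 
    (h : ((caterpillar k) \ fromEdgeSet {e}).Adj x y) :
    (caterpillar k).Adj x y ∧ s(x,y) ≠ e := by
  rw [sdiff_adj, fromEdgeSet_adj] at h
  obtain ⟨h1, h2⟩ := h
  exact ⟨h1, fun he => h2 ⟨by simpa using he, h1.ne⟩⟩

lemma bridge_path (i j : Fin k) (h : (i:ℕ)+1 = j) :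
    (caterpillar k).IsBridge s(Sum.inl i, Sum.inl j) := by
  rw [isBridge_iff]
  refine not_reachable_of_invariant (fun x => pos x ≤ (i:ℕ)) ?_
    (le_refl _) (by simp only [pos, Sum.elim_inl]; omega)
  intro x y hxy
  obtain ⟨hadj, hne⟩ := del_adj hxy
  cases x with
  | inl a =>
    cases y with
    | inl b =>
        rw [adj_inl_inl] at hadj
        simp only [ne_eq, Sym2.eq_iff, Sum.inl.injEq, Fin.ext_iff, not_or, not_and] at hne
        simp only [pos, Sum.elim_inl]
        omega
    | inr q =>
        rw [adj_inl_inr] at hadj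
        subst hadj
        simp [pos]
  | inr p =>
    rw [adj_inr] at hadj
    subst hadj
    simp [pos]

lemma bridge_leaf (p : Fin k × Fin 2) :
    (caterpillar k).IsBridge s(Sum.inl p.1, Sum.inr p) := by
  rw [isBridge_iff]
  refine not_reachable_of_invariant (fun x => x ≠ Sum.inr p) ?_
    (by simp) (by simp)
  intro x y hxy hx
  obtain ⟨hadj, hne⟩ := del_adj hxy
  rintro rfl
  have hx' : x = Sum.inl p.1 := by
    rw [(caterpillar k).adj_comm, adj_inr] at hadj
    exact hadj
  subst hx'
  exact hne rfl

lemma acyclic : (caterpillar k).IsAcyclic := by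
  rw [isAcyclic_iff_forall_adj_isBridge]
  intro v w hvw
  cases v with
  | inl i =>
    cases w with
    | inl j =>
        rcases adj_inl_inl.1 hvw with h | h
        · exact bridge_path i j h
        · rw [Sym2.eq_swap]; exact bridge_path j i h
    | inr q =>
        have : q.1 = i := adj_inl_inr.1 hvw
        subst this
        exact bridge_leaf q
  | inr p =>
    cases w with
    | inl j =>
        have : Sum.inl j = Sum.inl p.1 := adj_inr.1 hvw
        have hj : j = p.1 := by simpa using this
        subst hj
        rw [Sym2.eq_swap]
        exact bridge_leaf p
    | inr q => exact absurd hvw adj_inr_inr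

/-! ### Forcing upper bounds -/

lemma forcing_of_leaves {S : Set (Fin k ⊕ Fin k × Fin 2)}
    (h0 : ∀ i : Fin k, Sum.inr (i, (0 : Fin 2)) ∈ S) : IsForcingSet (caterpillar k) S := by
  have hinl : ∀ i : Fin k, Forces (caterpillar k) S (Sum.inl i) := by
    intro i
    refine Forces.force (u := Sum.inr (i, 0)) (adj_inr.2 rfl) (Forces.mem (h0 i)) ?_
    intro w hw hne
    rw [adj_inr] at hw
    exact absurd hw hne
  intro v
  cases v with
  | inl i => exact hinl i
  | inr p =>
    obtain ⟨i, t⟩ := p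
    by_cases ht : t = 0
    · subst ht; exact Forces.mem (h0 i)
    · have ht1 : t = 1 := by omega
      subst ht1
      refine Forces.force (u := Sum.inl i) (adj_inl_inr.2 rfl) (hinl i) ?_
      intro w hw hne
      cases w with
      | inl j => exact hinl j
      | inr q =>
          have hq : q.1 = i := adj_inl_inr.1 hw
          have hq2 : q.2 = 0 := by
            by_contra h2
            have : q.2 = 1 := by omega
            exact hne (by rw [← hq, ← this])
          have : q = (i, 0) := by rw [← hq, ← hq2]
          rw [this]
          exact Forces.mem (h0 i)

/-! ### Forcing lower bound: a forcing set contains a leaf at each spine vertex -/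

lemma leaf_mem_of_forcing {S : Set (Fin k ⊕ Fin k × Fin 2)}
    (hS : IsForcingSet (caterpillar k) S) (i : Fin k) :
    Sum.inr (i, (0:Fin 2)) ∈ S ∨ Sum.inr (i, (1:Fin 2)) ∈ S := by
  by_contra hc
  push_neg at hc
  obtain ⟨h0, h1⟩ := hc
  have key : ∀ v, Forces (caterpillar k) S v →
      v ≠ Sum.inr (i, (0:Fin 2)) ∧ v ≠ Sum.inr (i, (1:Fin 2)) := by
    intro v hv
    induction hv with
    | mem hv =>
        constructor <;> rintro rfl <;> [exact h0 hv; exact h1 hv]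
    | force hadj hu hall ihu ihall =>
        rename_i u v
        constructor <;> rintro rfl
        · have hu' : u = Sum.inl i := adj_inr.1 hadj.symm
          subst hu'
          exact (ihall (Sum.inr (i,1)) (adj_inl_inr.2 rfl) (by simp)).2 rfl
        · have hu' : u = Sum.inl i := adj_inr.1 hadj.symm
          subst hu'
          exact (ihall (Sum.inr (i,0)) (adj_inl_inr.2 rfl) (by simp)).1 rfl
  exact (key _ (hS (Sum.inr (i, 0)))).1 rfl

/-! ### Explicit forcing sets -/

def S0 (k : ℕ) : Finset (Fin k ⊕ Fin k × Fin 2) :=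
  Finset.univ.image (fun i : Fin k => Sum.inr (i, (0:Fin 2)))

def S1 (k : ℕ) : Finset (Fin k ⊕ Fin k × Fin 2) :=
  Finset.univ.image Sum.inl ∪ S0 k

lemma mem_S0 {i : Fin k} : Sum.inr (i, (0:Fin 2)) ∈ S0 k := by
  simp [S0]

lemma card_S0 : (S0 k).card = k := by
  rw [S0, Finset.card_image_of_injective _ (fun a b h => by simpa using h)]
  simp

lemma card_S1 : (S1 k).card = 2 * k := by
  rw [S1, Finset.card_union_of_disjoint]
  · rw [card_S0, Finset.card_image_of_injective _ Sum.inl_injective]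
    simp; ring
  · rw [Finset.disjoint_left]
    intro a ha hb
    simp [S0] at ha hb
    obtain ⟨i, rfl⟩ := ha
    obtain ⟨j, hj⟩ := hb
    exact absurd hj (by simp)

lemma S0_forcing : IsForcingSet (caterpillar k) ↑(S0 k) :=
  forcing_of_leaves fun i => Finset.mem_coe.2 mem_S0

lemma S1_total : IsTotalForcingSet (caterpillar k) ↑(S1 k) := by
  constructor
  · exact forcing_of_leaves fun i => Finset.mem_coe.2 (by simp [S1, S0])
  · intro v hv
    simp only [Finset.mem_coe, S1, Finset.mem_union, Finset.mem_image, Finset.mem_univ,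
      true_and, S0] at hv
    rcases hv with ⟨i, rfl⟩ | hv
    · exact ⟨Sum.inr (i, 0), Finset.mem_coe.2 (by simp [S1, S0]), adj_inl_inr.2 rfl⟩
    · obtain ⟨i, rfl⟩ := hv
      exact ⟨Sum.inl i, Finset.mem_coe.2 (by simp [S1]), adj_inr.2 rfl⟩

/-! ### Lower bounds -/

noncomputable def pick (S : Finset (Fin k ⊕ Fin k × Fin 2)) (i : Fin k) :
    Fin k ⊕ Fin k × Fin 2 := by
  classical exact if Sum.inr (i, (0:Fin 2)) ∈ S then Sum.inr (i, (0:Fin 2)) else Sum.inr (i, 1)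

lemma pick_eq (S : Finset (Fin k ⊕ Fin k × Fin 2)) (i : Fin k) :
    ∃ t : Fin 2, pick S i = Sum.inr (i, t) := by
  unfold pick
  split_ifs <;> [exact ⟨0, rfl⟩; exact ⟨1, rfl⟩]

lemma pick_mem {S : Finset (Fin k ⊕ Fin k × Fin 2)}
    (hS : IsForcingSet (caterpillar k) ↑S) (i : Fin k) : pick S i ∈ S := by
  unfold pick
  split_ifs with h
  · exact h
  · rcases leaf_mem_of_forcing hS i with h0 | h1
    · exact absurd (Finset.mem_coe.1 h0) h
    · exact h1

lemma pick_inj (S : Finset (Fin k ⊕ Fin k × Fin 2)) : Function.Injective (pick S) := by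
  intro a b hab
  obtain ⟨t, ht⟩ := pick_eq S a
  obtain ⟨u, hu⟩ := pick_eq S b
  rw [ht, hu] at hab
  simpa using congrArg (fun x => Sum.elim (fun i : Fin k => i) Prod.fst x) hab

lemma forcing_lower {S : Finset (Fin k ⊕ Fin k × Fin 2)}
    (hS : IsForcingSet (caterpillar k) ↑S) : k ≤ S.card := by
  calc k = (Finset.univ.image (pick S)).card := by
        rw [Finset.card_image_of_injective _ (pick_inj S)]; simp
    _ ≤ S.card := by
        apply Finset.card_le_card
        intro x hx
        simp only [Finset.mem_image, Finset.mem_univ, true_and] at hx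
        obtain ⟨i, rfl⟩ := hx
        exact pick_mem hS i

lemma total_lower {S : Finset (Fin k ⊕ Fin k × Fin 2)}
    (hS : IsTotalForcingSet (caterpillar k) ↑S) : 2 * k ≤ S.card := by
  have hspine : ∀ i : Fin k, Sum.inl i ∈ S := by
    intro i
    obtain ⟨t, ht⟩ := pick_eq S i
    obtain ⟨u, huS, hadj⟩ := hS.2 (pick S i) (Finset.mem_coe.2 (pick_mem hS.1 i))
    rw [ht, adj_inr] at hadj
    rw [hadj] at huS
    exact Finset.mem_coe.1 huS
  have hsub : Finset.univ.image Sum.inl ∪ Finset.univ.image (pick S) ⊆ S := by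
    intro x hx
    rcases Finset.mem_union.1 hx with h | h <;>
      simp only [Finset.mem_image, Finset.mem_univ, true_and] at h
    · obtain ⟨i, rfl⟩ := h; exact hspine i
    · obtain ⟨i, rfl⟩ := h; exact pick_mem hS.1 i
  calc 2 * k = (Finset.univ.image Sum.inl ∪ Finset.univ.image (pick S)).card := by
        rw [Finset.card_union_of_disjoint]
        · rw [Finset.card_image_of_injective _ Sum.inl_injective,
            Finset.card_image_of_injective _ (pick_inj S)]
          simp; ring
        · rw [Finset.disjoint_left]
          intro a ha hb
          simp only [Finset.mem_image, Finset.mem_univ, true_and] at ha hb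
          obtain ⟨i, rfl⟩ := ha
          obtain ⟨j, hj⟩ := hb
          obtain ⟨t, ht⟩ := pick_eq S j
          rw [ht] at hj
          exact absurd hj (by simp)
    _ ≤ S.card := Finset.card_le_card hsub


end Aux

/-- For `k ≥ 1`, the tree `T` of order `3k` obtained from a path on
`k` vertices by attaching two new pendant leaves to each path vertex satisfies
`F_t(T) = 2k` and `F(T) = k`. -/
theorem stmt12 (k : ℕ) (hk : 1 ≤ k) :
    (caterpillar k).IsTree ∧ Fintype.card (Fin k ⊕ Fin k × Fin 2) = 3 * k ∧
      totalForcingNumber (caterpillar k) = 2 * k ∧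
      forcingNumber (caterpillar k) = k := by
  refine ⟨⟨connected hk, acyclic⟩, by simp; ring, ?_, ?_⟩
  · apply le_antisymm
    · exact Nat.sInf_le ⟨S1 k, card_S1, S1_total⟩
    · obtain ⟨S, hcard, hP⟩ := Nat.sInf_mem (⟨2*k, S1 k, card_S1, S1_total⟩ :
        Set.Nonempty {n : ℕ | ∃ S : Finset _, S.card = n ∧ IsTotalForcingSet (caterpillar k) ↑S})
      rw [totalForcingNumber, ← hcard]
      exact total_lower hP
  · apply le_antisymm
    · exact Nat.sInf_le ⟨S0 k, card_S0, S0_forcing⟩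
    · obtain ⟨S, hcard, hP⟩ := Nat.sInf_mem (⟨k, S0 k, card_S0, S0_forcing⟩ :
        Set.Nonempty {n : ℕ | ∃ S : Finset _, S.card = n ∧ IsForcingSet (caterpillar k) ↑S})
      rw [forcingNumber, ← hcard]
      exact forcing_lower hP

end TotalForcing
end

section
/- Let G be a finite simple graph with no isolated vertices that contains an edge e incident with a vertex of degree at most 2. If G' is obtained from G by subdividing the edge e any number of times, then F_t(G) = F_t(G'). -/
namespace TotalForcing

/-- The graph obtained from `G` by subdividing the edge `uv` by `m ≥ 1` new vertices:
the edge `uv` is deleted and replaced by the path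
`u – inr 0 – inr 1 – ⋯ – inr (m-1) – v`. -/
def subdivideEdge {V : Type*} (G : SimpleGraph V) (u v : V) (m : ℕ) :
    SimpleGraph (V ⊕ Fin m) :=
  SimpleGraph.fromRel (fun x y =>
    (∃ a b : V, x = Sum.inl a ∧ y = Sum.inl b ∧ G.Adj a b ∧
      ¬(a = u ∧ b = v) ∧ ¬(a = v ∧ b = u)) ∨
    (∃ i j : Fin m, x = Sum.inr i ∧ y = Sum.inr j ∧ (i : ℕ) + 1 = (j : ℕ)) ∨
    (∃ i : Fin m, x = Sum.inl u ∧ y = Sum.inr i ∧ (i : ℕ) = 0) ∨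
    (∃ i : Fin m, x = Sum.inl v ∧ y = Sum.inr i ∧ (i : ℕ) = m - 1))

end TotalForcing

/-!
By symmetry `u` has at most one neighbour besides `v`. Let `G'` be the subdivision and
`u = p 0, p 1, …, p (m + 1) = v` its new path. The interior vertices of the path have degree two,
so as soon as two consecutive path vertices are colored, the whole path is colored.

`F_t(G) ≤ F_t(G')`: a total forcing set `T` of `G'` gives the set of its vertices in `G`, together
with `u` and `v` if `T` meets the path. Every force of `G'` is mirrored in `G` (a path vertex
counts as colored once `u` and `v` are), and `u, v` are paid for by the path vertices of `T`: one
of them has a neighbour in `T`, which is `u`, `v` or a second path vertex.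

`F_t(G') ≤ F_t(G)`: a total forcing set `S` of `G` not containing both `u` and `v` is still one of
`G'`: the force `u → v` of `G` is replaced by forcing along the path, and `u` starts that path as
soon as it is colored. If `u, v ∈ S`, one vertex of `S` is traded for a path vertex: `u` for
`p m` if no other vertex of `S` has `u` as its only neighbour in `S`, symmetrically `v` for `p 1`,
and otherwise the neighbour `x ≠ v` of `u` for `p 1`, after which `u` forces `x` back.
-/

namespace TotalForcing

open Sum

section Forcing

variable {V W : Type*} {G : SimpleGraph V} {H : SimpleGraph W}

theorem Forces.map (e : G ≃g H) {S : Set V} {x : V} (hx : Forces G S x) :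
    Forces H (e '' S) (e x) := by
  induction hx with
  | mem h => exact .mem ⟨_, h, rfl⟩
  | @force a b hab _ _ iha ihnb =>
    refine .force (e.map_adj_iff.2 hab) iha fun w hw hwb => ?_
    simpa using ihnb (e.symm w) (by rwa [← e.map_adj_iff, e.apply_symm_apply])
      (by rintro rfl; simp at hwb)

theorem IsTotalForcingSet.map (e : G ≃g H) {S : Set V} (hS : IsTotalForcingSet G S) :
    IsTotalForcingSet H (e '' S) := by
  refine ⟨fun y => by simpa using (hS.1 (e.symm y)).map e, ?_⟩
  rintro _ ⟨x, hx, rfl⟩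
  obtain ⟨y, hy, hxy⟩ := hS.2 x hx
  exact ⟨e y, ⟨y, hy, rfl⟩, e.map_adj_iff.2 hxy⟩

theorem exists_isTotalForcingSet_map (e : G ≃g H) {n : ℕ}
    (h : ∃ S : Finset V, S.card ≤ n ∧ IsTotalForcingSet G ↑S) :
    ∃ S : Finset W, S.card ≤ n ∧ IsTotalForcingSet H ↑S := by
  obtain ⟨S, hcard, hS⟩ := h
  exact ⟨S.map e.toEquiv.toEmbedding, by simpa using hcard, by simpa using hS.map e⟩

theorem sInf_eq_sInf_of_forall_exists_le {A B : Set ℕ} (hAB : ∀ a ∈ A, ∃ b ∈ B, b ≤ a)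
    (hBA : ∀ b ∈ B, ∃ a ∈ A, a ≤ b) : sInf A = sInf B := by
  rcases A.eq_empty_or_nonempty with rfl | hA
  · rw [Set.eq_empty_of_forall_notMem (s := B) fun b hb => by simpa using hBA b hb]
  have hB : B.Nonempty := by
    obtain ⟨a, ha⟩ := hA
    obtain ⟨b, hb, -⟩ := hAB a ha
    exact ⟨b, hb⟩
  apply le_antisymm
  · obtain ⟨a, ha, hab⟩ := hBA _ (Nat.sInf_mem hB)
    exact (Nat.sInf_le ha).trans hab
  · obtain ⟨b, hb, hba⟩ := hAB _ (Nat.sInf_mem hA)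
    exact (Nat.sInf_le hb).trans hba

theorem totalForcingNumber_eq_of_exists_card_le [Fintype V] [Fintype W]
    (hGH : ∀ S : Finset V, IsTotalForcingSet G ↑S →
      ∃ T : Finset W, T.card ≤ S.card ∧ IsTotalForcingSet H ↑T)
    (hHG : ∀ T : Finset W, IsTotalForcingSet H ↑T →
      ∃ S : Finset V, S.card ≤ T.card ∧ IsTotalForcingSet G ↑S) :
    totalForcingNumber G = totalForcingNumber H := by
  refine sInf_eq_sInf_of_forall_exists_le ?_ ?_
  · rintro _ ⟨S, rfl, hS⟩
    obtain ⟨T, hT, hTH⟩ := hGH S hS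
    exact ⟨_, ⟨T, rfl, hTH⟩, hT⟩
  · rintro _ ⟨T, rfl, hT⟩
    obtain ⟨S, hS, hSG⟩ := hHG T hT
    exact ⟨_, ⟨S, rfl, hSG⟩, hS⟩

theorem totalForcingNumber_congr [Fintype V] [Fintype W] (e : G ≃g H) :
    totalForcingNumber G = totalForcingNumber H :=
  totalForcingNumber_eq_of_exists_card_le
    (fun S hS => exists_isTotalForcingSet_map e ⟨S, le_rfl, hS⟩)
    (fun T hT => exists_isTotalForcingSet_map e.symm ⟨T, le_rfl, hT⟩)

variable {p : ℕ → W} {n j : ℕ} {T : Set W}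

theorem forces_path_up
    (hadj : ∀ k < n, H.Adj (p k) (p (k + 1)))
    (hnbr : ∀ k, k + 1 < n → ∀ w, H.Adj (p (k + 1)) w → w = p k ∨ w = p (k + 2))
    (hj : Forces H T (p j)) (hj' : Forces H T (p (j + 1))) :
    ∀ k, j ≤ k → k < n → Forces H T (p k) ∧ Forces H T (p (k + 1)) := by
  intro k
  induction k with
  | zero =>
    intro hj0 _
    obtain rfl : j = 0 := Nat.le_zero.1 hj0
    exact ⟨hj, hj'⟩
  | succ k ih =>
    intro hjk hkn
    rcases hjk.eq_or_lt with rfl | hjk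
    · exact ⟨hj, hj'⟩
    obtain ⟨hk, hk'⟩ := ih (by omega) (by omega)
    refine ⟨hk', .force (hadj (k + 1) hkn) hk' fun w hw hne => ?_⟩
    rcases hnbr k hkn w hw with rfl | rfl
    exacts [hk, absurd rfl hne]

theorem forces_path_down
    (hadj : ∀ k < n, H.Adj (p k) (p (k + 1)))
    (hnbr : ∀ k, k + 1 < n → ∀ w, H.Adj (p (k + 1)) w → w = p k ∨ w = p (k + 2))
    (hjn : j < n) (hj : Forces H T (p j)) (hj' : Forces H T (p (j + 1))) :
    ∀ d ≤ j, Forces H T (p (j - d)) ∧ Forces H T (p (j - d + 1)) := by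
  intro d
  induction d with
  | zero => intro _; exact ⟨hj, hj'⟩
  | succ d ih =>
    intro hd
    obtain ⟨hk, hk'⟩ := ih (by omega)
    obtain ⟨i, hi, hi'⟩ : ∃ i, j - (d + 1) = i ∧ j - d = i + 1 := ⟨_, rfl, by omega⟩
    rw [hi'] at hk hk'
    rw [hi]
    refine ⟨.force (hadj i (by omega)).symm hk fun w hw hne => ?_, hk⟩
    rcases hnbr i (by omega) w hw with rfl | rfl
    exacts [absurd rfl hne, hk']

theorem forces_path
    (hadj : ∀ k < n, H.Adj (p k) (p (k + 1)))
    (hnbr : ∀ k, k + 1 < n → ∀ w, H.Adj (p (k + 1)) w → w = p k ∨ w = p (k + 2))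
    (hjn : j < n) (hj : Forces H T (p j)) (hj' : Forces H T (p (j + 1))) :
    ∀ k ≤ n, Forces H T (p k) := by
  intro k hk
  rcases lt_or_ge k j with hkj | hjk
  · simpa [Nat.sub_sub_self hkj.le] using
      (forces_path_down hadj hnbr hjn hj hj' (j - k) (by omega)).1
  rcases hk.lt_or_eq with hkn | rfl
  · exact (forces_path_up hadj hnbr hj hj' k hjk hkn).1
  · have := (forces_path_up hadj hnbr hj hj' (k - 1) (by omega) (by omega)).2
    rwa [Nat.sub_add_cancel (by omega)] at this

end Forcing

section Subdivision

variable {V : Type*} {G : SimpleGraph V} {u v : V} {m : ℕ}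

@[simp]
theorem subdivideEdge_adj_inl_inl {a b : V} :
    (subdivideEdge G u v m).Adj (inl a) (inl b) ↔ G.Adj a b ∧ s(a, b) ≠ s(u, v) := by
  simp only [subdivideEdge, SimpleGraph.fromRel_adj]
  aesop (add safe apply SimpleGraph.Adj.symm)

@[simp]
theorem subdivideEdge_adj_inl_inr {a : V} {i : Fin m} :
    (subdivideEdge G u v m).Adj (inl a) (inr i) ↔
      a = u ∧ (i : ℕ) = 0 ∨ a = v ∧ (i : ℕ) = m - 1 := by
  simp [subdivideEdge, SimpleGraph.fromRel_adj]

@[simp]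
theorem subdivideEdge_adj_inr_inl {a : V} {i : Fin m} :
    (subdivideEdge G u v m).Adj (inr i) (inl a) ↔
      a = u ∧ (i : ℕ) = 0 ∨ a = v ∧ (i : ℕ) = m - 1 := by
  rw [SimpleGraph.adj_comm, subdivideEdge_adj_inl_inr]

@[simp]
theorem subdivideEdge_adj_inr_inr {i j : Fin m} :
    (subdivideEdge G u v m).Adj (inr i) (inr j) ↔ (i : ℕ) + 1 = j ∨ (j : ℕ) + 1 = i := by
  simp only [subdivideEdge, SimpleGraph.fromRel_adj]
  aesop (add safe (by omega))

variable (G u v m) in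
def subdivideEdgeComm : subdivideEdge G v u m ≃g subdivideEdge G u v m where
  toEquiv := Equiv.sumCongr (Equiv.refl V) Fin.revPerm
  map_rel_iff' := by
    rintro (a | i) (b | j) <;> simp [Sym2.eq_swap] <;> grind

variable (u v m) in
def subdivisionPath : ℕ → V ⊕ Fin m
  | 0 => inl u
  | k + 1 => if h : k < m then inr ⟨k, h⟩ else inl v

@[simp]
theorem subdivisionPath_zero : subdivisionPath u v m 0 = inl u := rfl

theorem subdivisionPath_succ {k : ℕ} (hk : k < m) :
    subdivisionPath u v m (k + 1) = inr ⟨k, hk⟩ := by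
  simp [subdivisionPath, hk]

@[simp]
theorem subdivisionPath_succ_self : subdivisionPath u v m (m + 1) = inl v := by
  simp [subdivisionPath]

theorem subdivideEdge_adj_subdivisionPath (hm : 0 < m) :
    ∀ k < m + 1, (subdivideEdge G u v m).Adj (subdivisionPath u v m k)
      (subdivisionPath u v m (k + 1)) := by
  rintro (_ | k) hk
  · simp [subdivisionPath_succ hm]
  rw [subdivisionPath_succ (by omega)]
  rcases Nat.lt_or_ge (k + 1) m with h | h
  · simp [subdivisionPath_succ h]
  · obtain rfl : m = k + 1 := by omega
    simp

theorem eq_subdivisionPath_of_adj :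
    ∀ k, k + 1 < m + 1 → ∀ w,
      (subdivideEdge G u v m).Adj (subdivisionPath u v m (k + 1)) w →
      w = subdivisionPath u v m k ∨ w = subdivisionPath u v m (k + 2) := by
  intro k hk w hw
  rw [subdivisionPath_succ (by omega)] at hw
  rcases w with a | j
  · rw [subdivideEdge_adj_inr_inl] at hw
    rcases hw with ⟨rfl, rfl⟩ | ⟨rfl, rfl⟩
    · simp
    · right
      rw [show m - 1 + 2 = m + 1 by omega, subdivisionPath_succ_self]
  · rw [subdivideEdge_adj_inr_inr] at hw
    dsimp only at hw
    rcases hw with h | h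
    · right
      rw [subdivisionPath_succ (by omega)]
      exact congrArg inr (Fin.ext h.symm)
    · left
      obtain rfl : k = j + 1 := by omega
      rw [subdivisionPath_succ j.isLt]

end Subdivision

section FromSubdivision

variable {V : Type*} {G : SimpleGraph V} {u v : V} {m : ℕ}

theorem forces_of_forces_subdivideEdge (huv : G.Adj u v) (hm : 0 < m) {S : Set V}
    {T : Set (V ⊕ Fin m)}
    (hT : ∀ z ∈ T, Sum.elim (Forces G S) (fun _ => Forces G S u ∧ Forces G S v) z)
    {z : V ⊕ Fin m} (hz : Forces (subdivideEdge G u v m) T z) :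
    Sum.elim (Forces G S) (fun _ => Forces G S u ∧ Forces G S v) z := by
  induction hz with
  | mem h => exact hT _ h
  | @force y z hyz _ _ ihy ihnb =>
    rcases y with c | i <;> rcases z with a | j
    · rw [subdivideEdge_adj_inl_inl] at hyz
      refine .force hyz.1 ihy fun w hcw hwa => ?_
      by_cases hw : s(c, w) = s(u, v)
      · have hends : Forces G S u ∧ Forces G S v := by
          rcases Sym2.eq_iff.1 hw with ⟨rfl, -⟩ | ⟨rfl, -⟩
          · exact ihnb (inr ⟨0, hm⟩) (by simp) (by simp)
          · exact ihnb (inr ⟨m - 1, by omega⟩) (by simp) (by simp)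
        rcases Sym2.eq_iff.1 hw with ⟨-, rfl⟩ | ⟨-, rfl⟩
        exacts [hends.2, hends.1]
      · exact ihnb (inl w) (subdivideEdge_adj_inl_inl.2 ⟨hcw, hw⟩) (by simpa using hwa)
    · have hnb : ∀ w, G.Adj c w → s(c, w) ≠ s(u, v) → Forces G S w := fun w hcw hw =>
        ihnb (inl w) (subdivideEdge_adj_inl_inl.2 ⟨hcw, hw⟩) (by simp)
      rcases subdivideEdge_adj_inl_inr.1 hyz with ⟨rfl, -⟩ | ⟨rfl, -⟩
      · exact ⟨ihy, .force huv ihy fun w hw hwv => hnb w hw (Sym2.congr_right.not.2 hwv)⟩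
      · refine ⟨.force huv.symm ihy fun w hw hwu => hnb w hw ?_, ihy⟩
        rwa [Sym2.eq_swap (a := u), Ne, Sym2.congr_right]
    · rcases subdivideEdge_adj_inr_inl.1 hyz with ⟨rfl, -⟩ | ⟨rfl, -⟩
      exacts [ihy.1, ihy.2]
    · exact ihy

theorem isForcingSet_of_subdivideEdge (huv : G.Adj u v) (hm : 0 < m) {T : Set (V ⊕ Fin m)}
    (hT : IsForcingSet (subdivideEdge G u v m) T) {S : Set V}
    (hinl : ∀ a, inl a ∈ T → a ∈ S)
    (hinr : ∀ i, inr i ∈ T → u ∈ S ∧ v ∈ S) : IsForcingSet G S := by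
  refine fun a => forces_of_forces_subdivideEdge huv hm (fun z hz => ?_) (hT (inl a))
  rcases z with b | i
  · exact .mem (hinl b hz)
  · exact ⟨.mem (hinr i hz).1, .mem (hinr i hz).2⟩

theorem isTotalForcingSet_toLeft (huv : G.Adj u v) (hm : 0 < m) {T : Finset (V ⊕ Fin m)}
    (hT : IsTotalForcingSet (subdivideEdge G u v m) ↑T) (hR : T.toRight = ∅) :
    IsTotalForcingSet G ↑T.toLeft := by
  have hinr : ∀ i, inr i ∉ T := fun i hi => by simpa [hR] using Finset.mem_toRight.2 hi
  refine ⟨isForcingSet_of_subdivideEdge huv hm hT.1 (fun a ha => by simpa using ha)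
    (fun i hi => absurd hi (hinr i)), fun a ha => ?_⟩
  obtain ⟨y, hy, hay⟩ := hT.2 (inl a) (by simpa using ha)
  rcases y with b | i
  · exact ⟨b, by simpa using hy, (subdivideEdge_adj_inl_inl.1 hay).1⟩
  · exact absurd hy (hinr i)

theorem isTotalForcingSet_insert_insert_toLeft [DecidableEq V] (huv : G.Adj u v) (hm : 0 < m)
    {T : Finset (V ⊕ Fin m)} (hT : IsTotalForcingSet (subdivideEdge G u v m) ↑T) :
    IsTotalForcingSet G ↑(insert u (insert v T.toLeft)) := by
  refine ⟨isForcingSet_of_subdivideEdge huv hm hT.1 (fun a ha => by simp [Finset.mem_coe.1 ha])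
    (fun _ _ => by simp), fun a ha => ?_⟩
  by_cases hau : a = u
  · exact ⟨v, by simp, hau ▸ huv⟩
  by_cases hav : a = v
  · exact ⟨u, by simp, hav ▸ huv.symm⟩
  obtain ⟨y, hy, hay⟩ := hT.2 (inl a) (by simpa [hau, hav] using ha)
  rcases y with b | i
  · exact ⟨b, by simp [Finset.mem_coe.1 hy], (subdivideEdge_adj_inl_inl.1 hay).1⟩
  · simp [hau, hav] at hay

theorem card_insert_insert_toLeft_le [DecidableEq V] {T : Finset (V ⊕ Fin m)}
    (hT : IsTotalForcingSet (subdivideEdge G u v m) ↑T) (hR : T.toRight.Nonempty) :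
    (insert u (insert v T.toLeft)).card ≤ T.card := by
  rw [← Finset.card_toLeft_add_card_toRight (u := T)]
  obtain ⟨j, hj⟩ := hR
  obtain ⟨y, hy, hjy⟩ := hT.2 (inr j) (by simpa using hj)
  rcases y with b | i
  · have hb : b ∈ T.toLeft := by simpa using hy
    have : 1 ≤ T.toRight.card := Finset.card_pos.2 ⟨j, hj⟩
    rcases subdivideEdge_adj_inr_inl.1 hjy with ⟨rfl, -⟩ | ⟨rfl, -⟩
    · rw [Finset.card_insert_of_mem (by simp [hb])]
      linarith [Finset.card_insert_le v T.toLeft]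
    · rw [Finset.insert_eq_of_mem hb]
      linarith [Finset.card_insert_le u T.toLeft]
  · have : 2 ≤ T.toRight.card := Finset.one_lt_card.2
      ⟨j, hj, i, by simpa using hy, by rintro rfl; simp at hjy⟩
    linarith [Finset.card_insert_le u (insert v T.toLeft), Finset.card_insert_le v T.toLeft]

theorem exists_isTotalForcingSet_of_subdivideEdge (huv : G.Adj u v) (hm : 0 < m)
    {T : Finset (V ⊕ Fin m)} (hT : IsTotalForcingSet (subdivideEdge G u v m) ↑T) :
    ∃ S : Finset V, S.card ≤ T.card ∧ IsTotalForcingSet G ↑S := by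
  classical
  rcases T.toRight.eq_empty_or_nonempty with hR | hR
  · exact ⟨T.toLeft, Finset.card_toLeft_le, isTotalForcingSet_toLeft huv hm hT hR⟩
  · exact ⟨_, card_insert_insert_toLeft_le hT hR,
      isTotalForcingSet_insert_insert_toLeft huv hm hT⟩

end FromSubdivision

section ToSubdivision

variable {V : Type*} {G : SimpleGraph V} {u v : V} {m : ℕ} {T : Set (V ⊕ Fin m)}

theorem forces_inl_of_forces
    (hpath : ∀ k ≤ m + 1, Forces (subdivideEdge G u v m) T (subdivisionPath u v m k))
    {S : Set V} (hS : ∀ a ∈ S, Forces (subdivideEdge G u v m) T (inl a)) {a : V}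
    (ha : Forces G S a) : Forces (subdivideEdge G u v m) T (inl a) := by
  induction ha with
  | mem h => exact hS _ h
  | @force c a hca _ _ ihc ihnb =>
    by_cases he : s(c, a) = s(u, v)
    · rcases Sym2.eq_iff.1 he with ⟨-, rfl⟩ | ⟨-, rfl⟩
      · simpa using hpath (m + 1) le_rfl
      · simpa using hpath 0 (by omega)
    refine .force (subdivideEdge_adj_inl_inl.2 ⟨hca, he⟩) ihc fun w hw hne => ?_
    rcases w with w | i
    · exact ihnb w (subdivideEdge_adj_inl_inl.1 hw).1 (by simpa using hne)
    · simpa [subdivisionPath_succ i.isLt] using hpath (i + 1) (by omega)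

theorem isForcingSet_subdivideEdge
    (hpath : ∀ k ≤ m + 1, Forces (subdivideEdge G u v m) T (subdivisionPath u v m k))
    {S : Set V} (hS : IsForcingSet G S)
    (hST : ∀ a ∈ S, Forces (subdivideEdge G u v m) T (inl a)) :
    IsForcingSet (subdivideEdge G u v m) T
  | inl a => forces_inl_of_forces hpath hST (hS a)
  | inr i => by simpa [subdivisionPath_succ i.isLt] using hpath (i + 1) (by omega)

theorem forces_subdivisionPath (hm : 0 < m) {j : ℕ} (hj : j ≤ m)
    (h : Forces (subdivideEdge G u v m) T (subdivisionPath u v m j))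
    (h' : Forces (subdivideEdge G u v m) T (subdivisionPath u v m (j + 1))) :
    ∀ k ≤ m + 1, Forces (subdivideEdge G u v m) T (subdivisionPath u v m k) :=
  forces_path (subdivideEdge_adj_subdivisionPath hm) eq_subdivisionPath_of_adj (by omega) h h'

theorem forces_subdivisionPath_of_left (huv : G.Adj u v) (hm : 0 < m)
    (hu : Forces (subdivideEdge G u v m) T (inl u))
    (hnb : ∀ w, G.Adj u w → w ≠ v → Forces (subdivideEdge G u v m) T (inl w)) :
    ∀ k ≤ m + 1, Forces (subdivideEdge G u v m) T (subdivisionPath u v m k) := by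
  refine forces_subdivisionPath hm (j := 0) (Nat.zero_le _) hu
    (.force (subdivideEdge_adj_subdivisionPath hm 0 (by omega)) hu fun z hz hne => ?_)
  rw [zero_add, subdivisionPath_succ hm] at hne
  rcases z with w | i
  · obtain ⟨huw, hne'⟩ := subdivideEdge_adj_inl_inl.1 hz
    exact hnb w huw (Sym2.congr_right.not.1 hne')
  · rcases subdivideEdge_adj_inl_inr.1 hz with ⟨-, hi⟩ | ⟨huv', -⟩
    · exact absurd (congrArg inr (Fin.ext hi)) hne
    · exact absurd huv' huv.ne

theorem forces_subdivisionPath_of_right (huv : G.Adj u v) (hm : 0 < m)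
    (hv : Forces (subdivideEdge G u v m) T (inl v))
    (hnb : ∀ w, G.Adj v w → w ≠ u → Forces (subdivideEdge G u v m) T (inl w)) :
    ∀ k ≤ m + 1, Forces (subdivideEdge G u v m) T (subdivisionPath u v m k) := by
  obtain ⟨n, rfl⟩ : ∃ n, m = n + 1 := ⟨m - 1, by omega⟩
  have hv' : Forces (subdivideEdge G u v (n + 1)) T (subdivisionPath u v (n + 1) (n + 1 + 1)) := by
    simpa using hv
  refine forces_subdivisionPath hm le_rfl ?_ hv'
  refine .force (subdivideEdge_adj_subdivisionPath hm (n + 1) (by omega)).symm hv'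
    fun z hz hne => ?_
  rw [subdivisionPath_succ (by omega)] at hne
  rw [subdivisionPath_succ_self] at hz
  rcases z with w | i
  · obtain ⟨hvw, hne'⟩ := subdivideEdge_adj_inl_inl.1 hz
    exact hnb w hvw (by rwa [Sym2.eq_swap (a := u), Ne, Sym2.congr_right] at hne')
  · rcases subdivideEdge_adj_inl_inr.1 hz with ⟨hvu, -⟩ | ⟨-, hi⟩
    · exact absurd hvu huv.ne'
    · exact absurd (congrArg inr (Fin.ext (by simpa using hi))) hne

theorem forces_image_inl_of_notMem (huv : G.Adj u v)
    (hdeg : (G.neighborSet u \ {v}).Subsingleton) (hm : 0 < m) {S : Set V} (huS : u ∉ S)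
    {a : V} (ha : Forces G S a) :
    Forces (subdivideEdge G u v m) (inl '' S) (inl a) ∧ (a = u → ∀ k ≤ m + 1,
      Forces (subdivideEdge G u v m) (inl '' S) (subdivisionPath u v m k)) := by
  induction ha with
  | mem h => exact ⟨.mem ⟨_, h, rfl⟩, fun hau => absurd (hau ▸ h) huS⟩
  | @force c a hca _ _ ihc ihnb =>
    by_cases he : s(c, a) = s(u, v)
    · rcases Sym2.eq_iff.1 he with ⟨rfl, rfl⟩ | ⟨rfl, rfl⟩
      · have := forces_subdivisionPath_of_left huv hm ihc.1 fun w hw hwv => (ihnb w hw hwv).1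
        exact ⟨by simpa using this (m + 1) le_rfl, fun h => absurd h huv.ne'⟩
      · have := forces_subdivisionPath_of_right huv hm ihc.1 fun w hw hwu => (ihnb w hw hwu).1
        exact ⟨by simpa using this 0 (by omega), fun _ => this⟩
    have hpath : c = u ∨ c = v → ∀ k ≤ m + 1,
        Forces (subdivideEdge G u v m) (inl '' S) (subdivisionPath u v m k) := by
      rintro (rfl | rfl)
      · exact ihc.2 rfl
      · exact (ihnb u huv.symm (by rintro rfl; exact he Sym2.eq_swap)).2 rfl
    have ha : Forces (subdivideEdge G u v m) (inl '' S) (inl a) := by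
      refine .force (subdivideEdge_adj_inl_inl.2 ⟨hca, he⟩) ihc.1 fun w hw hne => ?_
      rcases w with w | i
      · exact (ihnb w (subdivideEdge_adj_inl_inl.1 hw).1 (by simpa using hne)).1
      · have hc : c = u ∨ c = v := by
          rcases subdivideEdge_adj_inl_inr.1 hw with ⟨hc, -⟩ | ⟨hc, -⟩ <;> simp [hc]
        simpa [subdivisionPath_succ i.isLt] using hpath hc (i + 1) (by omega)
    refine ⟨ha, ?_⟩
    rintro rfl
    refine forces_subdivisionPath_of_left huv hm ha fun w hw hwv => ?_
    have hcv : c ≠ v := by rintro rfl; exact he Sym2.eq_swap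
    rw [hdeg ⟨hw, hwv⟩ ⟨hca.symm, hcv⟩]
    exact ihc.1

theorem isTotalForcingSet_image_inl (huv : G.Adj u v)
    (hdeg : (G.neighborSet u \ {v}).Subsingleton) (hm : 0 < m) {S : Set V}
    (hS : IsTotalForcingSet G S) (hends : ¬(u ∈ S ∧ v ∈ S)) :
    IsTotalForcingSet (subdivideEdge G u v m) (inl '' S) := by
  have hpath : ∀ k ≤ m + 1,
      Forces (subdivideEdge G u v m) (inl '' S) (subdivisionPath u v m k) := by
    by_cases hu : u ∈ S
    · obtain ⟨y, hy, huy⟩ := hS.2 u hu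
      have hyv : y ≠ v := fun hyv => hends ⟨hu, hyv ▸ hy⟩
      refine forces_subdivisionPath_of_left huv hm (.mem ⟨u, hu, rfl⟩) fun w hw hwv => ?_
      rw [hdeg ⟨hw, hwv⟩ ⟨huy, hyv⟩]
      exact .mem ⟨y, hy, rfl⟩
    · exact (forces_image_inl_of_notMem huv hdeg hm hu (hS.1 u)).2 rfl
  refine ⟨isForcingSet_subdivideEdge hpath hS.1 fun a ha => .mem ⟨a, ha, rfl⟩, ?_⟩
  rintro _ ⟨a, ha, rfl⟩
  obtain ⟨b, hb, hab⟩ := hS.2 a ha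
  refine ⟨inl b, ⟨b, hb, rfl⟩, subdivideEdge_adj_inl_inl.2 ⟨hab, fun he => hends ?_⟩⟩
  rcases Sym2.eq_iff.1 he with ⟨rfl, rfl⟩ | ⟨rfl, rfl⟩
  exacts [⟨ha, hb⟩, ⟨hb, ha⟩]

theorem isTotalForcingSet_insert_subdivisionPath_self (huv : G.Adj u v) (hm : 0 < m)
    {S : Set V} (hS : IsTotalForcingSet G S) (hv : v ∈ S)
    (h : ∀ x ∈ S, x ≠ v → G.Adj x u → ∃ y ∈ S, G.Adj x y ∧ y ≠ u) :
    IsTotalForcingSet (subdivideEdge G u v m)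
      (insert (subdivisionPath u v m m) (inl '' (S \ {u}))) := by
  set T := insert (subdivisionPath u v m m) (inl '' (S \ {u}))
  have hvT : inl v ∈ T := Set.mem_insert_of_mem _ ⟨v, ⟨hv, huv.ne'⟩, rfl⟩
  have hadj : (subdivideEdge G u v m).Adj (subdivisionPath u v m m) (inl v) := by
    simpa using subdivideEdge_adj_subdivisionPath hm m (by omega)
  have hpath : ∀ k ≤ m + 1, Forces (subdivideEdge G u v m) T (subdivisionPath u v m k) :=
    forces_subdivisionPath hm le_rfl (.mem (Set.mem_insert _ _))
      (by rw [subdivisionPath_succ_self]; exact .mem hvT)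
  refine ⟨isForcingSet_subdivideEdge hpath hS.1 fun a ha => ?_, ?_⟩
  · by_cases hau : a = u
    · simpa [hau] using hpath 0 (by omega)
    · exact .mem (Set.mem_insert_of_mem _ ⟨a, ⟨ha, hau⟩, rfl⟩)
  rintro _ (rfl | ⟨a, ⟨ha, hau⟩, rfl⟩)
  · exact ⟨inl v, hvT, hadj⟩
  by_cases hav : a = v
  · exact ⟨_, Set.mem_insert _ _, hav ▸ hadj.symm⟩
  obtain ⟨y, hy, hay, hyu⟩ : ∃ y ∈ S, G.Adj a y ∧ y ≠ u := by
    obtain ⟨y, hy, hay⟩ := hS.2 a ha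
    by_cases hyu : y = u
    · exact h a ha hav (hyu ▸ hay)
    · exact ⟨y, hy, hay, hyu⟩
  refine ⟨inl y, Set.mem_insert_of_mem _ ⟨y, ⟨hy, hyu⟩, rfl⟩,
    subdivideEdge_adj_inl_inl.2 ⟨hay, ?_⟩⟩
  simp_all

theorem isTotalForcingSet_insert_subdivisionPath_one (huv : G.Adj u v)
    (hdeg : (G.neighborSet u \ {v}).Subsingleton) (hm : 0 < m) {S : Set V}
    (hS : IsTotalForcingSet G S) (hu : u ∈ S) {x : V} (hxv : x ≠ v)
    (hux : G.Adj u x) (hxonly : ∀ y ∈ S, G.Adj x y → y = u)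
    (hv : ∃ y ∈ S, G.Adj v y ∧ y ≠ u) :
    IsTotalForcingSet (subdivideEdge G u v m)
      (insert (subdivisionPath u v m 1) (inl '' (S \ {x}))) := by
  set T := insert (subdivisionPath u v m 1) (inl '' (S \ {x}))
  have huT : inl u ∈ T := Set.mem_insert_of_mem _ ⟨u, ⟨hu, hux.ne⟩, rfl⟩
  have hadj : (subdivideEdge G u v m).Adj (inl u) (subdivisionPath u v m 1) := by
    simpa using subdivideEdge_adj_subdivisionPath hm 0 (by omega)
  have hpath : ∀ k ≤ m + 1, Forces (subdivideEdge G u v m) T (subdivisionPath u v m k) :=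
    forces_subdivisionPath hm (Nat.zero_le _) (.mem huT) (.mem (Set.mem_insert _ _))
  have hxT : Forces (subdivideEdge G u v m) T (inl x) := by
    refine .force (subdivideEdge_adj_inl_inl.2 ⟨hux, Sym2.congr_right.not.2 hxv⟩)
      (.mem huT) fun z hz hne => ?_
    rcases z with w | i
    · obtain ⟨huw, hwv⟩ := subdivideEdge_adj_inl_inl.1 hz
      exact absurd (congrArg inl (hdeg ⟨huw, Sym2.congr_right.not.1 hwv⟩ ⟨hux, hxv⟩)) hne
    · simpa [subdivisionPath_succ i.isLt] using hpath (i + 1) (by omega)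
  refine ⟨isForcingSet_subdivideEdge hpath hS.1 fun a ha => ?_, ?_⟩
  · by_cases hax : a = x
    · exact hax ▸ hxT
    · exact .mem (Set.mem_insert_of_mem _ ⟨a, ⟨ha, hax⟩, rfl⟩)
  rintro _ (rfl | ⟨a, ⟨ha, hax⟩, rfl⟩)
  · exact ⟨inl u, huT, hadj.symm⟩
  by_cases hau : a = u
  · exact ⟨_, Set.mem_insert _ _, hau ▸ hadj⟩
  obtain ⟨y, hy, hay, he⟩ : ∃ y ∈ S, G.Adj a y ∧ s(a, y) ≠ s(u, v) := by
    by_cases hav : a = v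
    · obtain ⟨y, hy, hvy, hyu⟩ := hv
      subst hav
      exact ⟨y, hy, hvy, by simp_all⟩
    · obtain ⟨y, hy, hay⟩ := hS.2 a ha
      exact ⟨y, hy, hay, by simp_all⟩
  have hyx : y ≠ x := by rintro rfl; exact hau (hxonly a ha hay.symm)
  exact ⟨inl y, Set.mem_insert_of_mem _ ⟨y, ⟨hy, hyx⟩, rfl⟩,
    subdivideEdge_adj_inl_inl.2 ⟨hay, he⟩⟩

theorem exists_isTotalForcingSet_of_insert_image_inl {W : Type*} [DecidableEq V]
    [DecidableEq W] {H : SimpleGraph (V ⊕ W)} {S : Finset V} {r : V} (hr : r ∈ S) {z : V ⊕ W}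
    (h : IsTotalForcingSet H (insert z (inl '' (↑S \ {r})))) :
    ∃ T : Finset (V ⊕ W), T.card ≤ S.card ∧ IsTotalForcingSet H ↑T := by
  refine ⟨insert z ((S.erase r).map .inl), ?_, ?_⟩
  calc _ ≤ ((S.erase r).map .inl).card + 1 := Finset.card_insert_le _ _
    _ = S.card := by rw [Finset.card_map, Finset.card_erase_add_one hr]
  rw [Finset.coe_insert, Finset.coe_map, Finset.coe_erase]
  exact h

theorem exists_isTotalForcingSet_subdivideEdge (huv : G.Adj u v)
    (hdeg : (G.neighborSet u \ {v}).Subsingleton) (hm : 0 < m) {S : Finset V}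
    (hS : IsTotalForcingSet G ↑S) :
    ∃ T : Finset (V ⊕ Fin m), T.card ≤ S.card ∧
      IsTotalForcingSet (subdivideEdge G u v m) ↑T := by
  classical
  by_cases hends : u ∈ S ∧ v ∈ S
  swap
  · exact ⟨S.map .inl, (Finset.card_map _).le,
      by simpa using isTotalForcingSet_image_inl huv hdeg hm hS (by simpa using hends)⟩
  obtain ⟨hu, hv⟩ := hends
  by_cases hx : ∀ x ∈ S, x ≠ v → G.Adj x u → ∃ y ∈ S, G.Adj x y ∧ y ≠ u
  · exact exists_isTotalForcingSet_of_insert_image_inl hu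
      (isTotalForcingSet_insert_subdivisionPath_self huv hm hS hv hx)
  push Not at hx
  obtain ⟨x, hxS, hxv, hxu, hxonly⟩ := hx
  by_cases hvy : ∃ y ∈ S, G.Adj v y ∧ y ≠ u
  · exact exists_isTotalForcingSet_of_insert_image_inl hxS
      (isTotalForcingSet_insert_subdivisionPath_one huv hdeg hm hS hu hxv hxu.symm hxonly hvy)
  push Not at hvy
  exact exists_isTotalForcingSet_map (subdivideEdgeComm G u v m)
    (exists_isTotalForcingSet_of_insert_image_inl hv
      (isTotalForcingSet_insert_subdivisionPath_self huv.symm hm hS hu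
        fun y hy hyu hyv => absurd (hvy y hy hyv.symm) hyu))

end ToSubdivision

theorem subsingleton_neighborSet_sdiff {V : Type*} [Finite V] {G : SimpleGraph V} {u v : V}
    (huv : G.Adj u v) (h : (G.neighborSet u).ncard ≤ 2) :
    (G.neighborSet u \ {v}).Subsingleton := by
  rw [← Set.ncard_le_one_iff_subsingleton,
    Set.ncard_sdiff_singleton_of_mem (show v ∈ G.neighborSet u from huv)]
  omega

theorem totalForcingNumber_subdivideEdge {V : Type*} [Fintype V] {G : SimpleGraph V} {u v : V}
    (huv : G.Adj u v) (hdeg : (G.neighborSet u \ {v}).Subsingleton) {m : ℕ} (hm : 0 < m) :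
    totalForcingNumber G = totalForcingNumber (subdivideEdge G u v m) :=
  totalForcingNumber_eq_of_exists_card_le
    (fun _ hS => exists_isTotalForcingSet_subdivideEdge huv hdeg hm hS)
    (fun _ hT => exists_isTotalForcingSet_of_subdivideEdge huv hm hT)

theorem stmt15_general {V : Type*} [Fintype V] (G : SimpleGraph V)
    (u v : V) (huv : G.Adj u v)
    (hdeg : (G.neighborSet u).ncard ≤ 2 ∨ (G.neighborSet v).ncard ≤ 2)
    (m : ℕ) (hm : 1 ≤ m) :
    totalForcingNumber G = totalForcingNumber (subdivideEdge G u v m) := by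
  rcases hdeg with h | h
  · exact totalForcingNumber_subdivideEdge huv (subsingleton_neighborSet_sdiff huv h) hm
  · rw [totalForcingNumber_subdivideEdge huv.symm (subsingleton_neighborSet_sdiff huv.symm h) hm]
    exact totalForcingNumber_congr (subdivideEdgeComm G u v m)

/-- Let `G` be a graph with no isolated vertices containing an edge
`uv` incident with a vertex of degree at most `2`. If `G'` is obtained from `G` by
subdividing this edge any (positive) number of times, then `F_t(G) = F_t(G')`. -/
theorem stmt15 {V : Type*} [Fintype V] (G : SimpleGraph V)
    (hiso : ∀ x : V, ∃ y : V, G.Adj x y)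
    (u v : V) (huv : G.Adj u v)
    (hdeg : (G.neighborSet u).ncard ≤ 2 ∨ (G.neighborSet v).ncard ≤ 2)
    (m : ℕ) (hm : 1 ≤ m) :
    totalForcingNumber G = totalForcingNumber (subdivideEdge G u v m) :=
  stmt15_general G u v huv hdeg m hm

end TotalForcing
end
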